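/- arXiv:1803.07409 — 6 statements merged into one kernel-verified Lean document; each statement's English description precedes it below -/
import Mathlib

section
/- Let G be a graph without isolated edges whose edge set admits a 2-colouring with colours red and blue such that the red subgraph R satisfies χ(R) ≤ r and the blue subgraph B satisfies χ(B) ≤ b, where r ≥ 3 and b ≥ 3. Then G admits such a 2-colouring in which additionally neither the red subgraph nor the blue subgraph contains an isolated edge. -/
open Classical in
/-- Degree of `v` in `G` (classical, so usable for arbitrary subgraphs). -/
noncomputable def deg {V : Type*} [Fintype V] (G : SimpleGraph V) (v : V) : ℕ :=
  G.degree v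

open Classical in
/-- Weighted degree (sum) of `v` under edge weighting `w`. -/
noncomputable def wdeg {V : Type*} [Fintype V] (G : SimpleGraph V) (w : Sym2 V → ℕ) (v : V) : ℕ :=
  ∑ e ∈ G.incidenceFinset v, w e

/-- `G` has no `K₂`-component: every edge is adjacent to some other edge. -/
def NoIsolatedEdge {V : Type*} (G : SimpleGraph V) : Prop :=
  ∀ u v, G.Adj u v → ∃ x, (G.Adj u x ∧ x ≠ v) ∨ (G.Adj v x ∧ x ≠ u)

/-- `G` admits a neighbour-sum-distinguishing edge weighting with weights in {1,2,3}. -/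
def Fulfills123 {V : Type*} [Fintype V] (G : SimpleGraph V) : Prop :=
  ∃ w : Sym2 V → ℕ, (∀ e ∈ G.edgeSet, w e = 1 ∨ w e = 2 ∨ w e = 3) ∧
    ∀ u v, G.Adj u v → wdeg G w u ≠ wdeg G w v

/-!
Among all admissible red/blue splittings, decrease the total number of isolated edges. Let `uv`
be an isolated red edge; as `G` has no isolated edge, some endpoint, say `u`, has a blue
neighbour. If deleting some blue edge `uy` creates no new isolated blue edge, recolour `uy` red:
the red graph stays `r`-colourable after recolouring `u` alone, since `u` then has only the two
red neighbours `v` and `y`. Otherwise every blue edge at `u` is needed to keep a neighbouring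
edge from becoming isolated, which forces the blue graph to be a spider with legs of length at
most two around `u`; recolouring `u` and its blue neighbours then makes room for recolouring
`uv` blue. In both cases `uv` stops being isolated and no new isolated edge appears.
-/

namespace SimpleGraph

variable {V : Type*} {H K : SimpleGraph V} {u v t x y c : V}

/-- The edges of `H` that form a `K₂`-component. -/
def isolatedEdges (H : SimpleGraph V) : Set (Sym2 V) :=
  {e | e ∈ H.edgeSet ∧ ∀ a ∈ e, ∀ c, H.Adj a c → c ∈ e}

lemma mk_mem_isolatedEdges :
    s(u, v) ∈ H.isolatedEdges ↔
      H.Adj u v ∧ (∀ c, H.Adj u c → c = v) ∧ ∀ c, H.Adj v c → c = u := by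
  refine ⟨fun ⟨huv, h⟩ ↦ ⟨huv, fun c hc ↦ ?_, fun c hc ↦ ?_⟩, fun ⟨huv, hu, hv⟩ ↦ ⟨huv, ?_⟩⟩
  · exact (Sym2.mem_iff.1 (h u (Sym2.mem_mk_left u v) c hc)).resolve_left hc.ne'
  · exact (Sym2.mem_iff.1 (h v (Sym2.mem_mk_right u v) c hc)).resolve_right hc.ne'
  · rintro a ha c hc
    rcases Sym2.mem_iff.1 ha with rfl | rfl
    · exact hu c hc ▸ Sym2.mem_mk_right a v
    · exact hv c hc ▸ Sym2.mem_mk_left u a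

lemma noIsolatedEdge_of_isolatedEdges_eq_empty (h : H.isolatedEdges = ∅) : NoIsolatedEdge H := by
  intro u v huv
  by_contra! hne
  have : s(u, v) ∈ H.isolatedEdges :=
    mk_mem_isolatedEdges.2 ⟨huv, fun c hc ↦ (hne c).1 hc, fun c hc ↦ (hne c).2 hc⟩
  simp [h] at this

lemma mem_isolatedEdges_of_adj_iff {e : Sym2 V} (he : e ∈ K.isolatedEdges)
    (hadj : ∀ a ∈ e, ∀ c, K.Adj a c ↔ H.Adj a c) : e ∈ H.isolatedEdges := by
  induction e using Sym2.ind with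
  | h p q =>
    refine ⟨(hadj p (Sym2.mem_mk_left p q) q).1 he.1, fun a ha c hc ↦ ?_⟩
    exact he.2 a ha c ((hadj a ha c).2 hc)

lemma edge_adj_of_ne (h : u ≠ v) : (edge u v).Adj u v :=
  (edge_adj u v u v).2 ⟨Or.inl ⟨rfl, rfl⟩, h⟩

lemma sup_edge_adj_iff_of_ne {a c : V} (hu : a ≠ u) (hv : a ≠ v) :
    (H ⊔ edge u v).Adj a c ↔ H.Adj a c := by
  simp [edge_adj, hu, hv]

lemma sdiff_edge_adj_iff_of_ne {a c : V} (hu : a ≠ u) (hv : a ≠ v) :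
    (H \ edge u v).Adj a c ↔ H.Adj a c := by
  simp [sdiff_adj, edge_adj, hu, hv]

lemma isolatedEdges_sup_edge_subset (hux : H.Adj u x) (hxv : x ≠ v) :
    (H ⊔ edge u v).isolatedEdges ⊆ H.isolatedEdges := by
  rcases eq_or_ne u v with rfl | huv
  · simp
  intro e he
  have hedge : (H ⊔ edge u v).Adj u v := Or.inr (edge_adj_of_ne huv)
  have hu : u ∉ e := by
    intro hu
    obtain ⟨w, rfl⟩ := Sym2.mem_iff_exists.1 hu
    have hx := Sym2.mem_iff.1 (he.2 u hu x (Or.inl hux))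
    have hv := Sym2.mem_iff.1 (he.2 u hu v hedge)
    rw [or_iff_right hux.ne'] at hx
    rw [or_iff_right huv.symm] at hv
    exact hxv (hx.trans hv.symm)
  have hv : v ∉ e := fun hv ↦ hu (he.2 v hv u hedge.symm)
  refine mem_isolatedEdges_of_adj_iff he fun a ha c ↦ sup_edge_adj_iff_of_ne ?_ ?_
  · rintro rfl; exact hu ha
  · rintro rfl; exact hv ha

lemma isolatedEdges_sdiff_edge_subset (huv : s(u, v) ∈ H.isolatedEdges) :
    (H \ edge u v).isolatedEdges ⊆ H.isolatedEdges := by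
  obtain ⟨-, hu, hv⟩ := mk_mem_isolatedEdges.1 huv
  have isolated : ∀ {a b}, (∀ c, H.Adj a c → c = b) → ∀ c, ¬ (H \ edge a b).Adj a c := by
    intro a b hab c hac
    obtain ⟨hac, hne⟩ := (sdiff_adj _ _ _ _).1 hac
    exact hne ((edge_adj a b a c).2 ⟨Or.inl ⟨rfl, hab c hac⟩, hac.ne⟩)
  intro e he
  have hnot : ∀ a ∈ e, a ≠ u ∧ a ≠ v := by
    rintro a ha
    obtain ⟨w, rfl⟩ := Sym2.mem_iff_exists.1 ha
    have haw : (H \ edge u v).Adj a w := he.1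
    refine ⟨fun h ↦ isolated hu w (h ▸ haw), fun h ↦ isolated hv w ?_⟩
    rw [edge_comm]
    exact h ▸ haw
  exact mem_isolatedEdges_of_adj_iff he fun a ha c ↦
    sdiff_edge_adj_iff_of_ne (hnot a ha).1 (hnot a ha).2

lemma isolatedEdges_sdiff_edge_ssubset (huv : s(u, v) ∈ H.isolatedEdges) :
    (H \ edge u v).isolatedEdges ⊂ H.isolatedEdges := by
  refine Set.ssubset_iff_subset_ne.2 ⟨isolatedEdges_sdiff_edge_subset huv, fun h ↦ ?_⟩
  have hadj : (H \ edge u v).Adj u v := (h ▸ huv).1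
  exact ((sdiff_adj _ _ _ _).1 hadj).2 (edge_adj_of_ne hadj.ne)

lemma isolatedEdges_sup_edge_ssubset (huv : s(u, v) ∈ H.isolatedEdges) (hyu : y ≠ u)
    (hyv : y ≠ v) : (H ⊔ edge u y).isolatedEdges ⊂ H.isolatedEdges := by
  refine Set.ssubset_iff_subset_ne.2
    ⟨isolatedEdges_sup_edge_subset huv.1 hyv.symm, fun h ↦ ?_⟩
  have hy := (h ▸ huv).2 u (Sym2.mem_mk_left u v) y
    (Or.inr (edge_adj_of_ne hyu.symm))
  rcases Sym2.mem_iff.1 hy with h | h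
  exacts [hyu h, hyv h]

lemma pendant_of_mk_mem_isolatedEdges_sdiff_edge (h : s(u, c) ∈ (H \ edge u t).isolatedEdges) :
    c ≠ t ∧ H.Adj u c ∧ (∀ d, H.Adj u d → d = t ∨ d = c) ∧ ∀ d, H.Adj c d → d = u := by
  obtain ⟨huc, hu, hc⟩ := mk_mem_isolatedEdges.1 h
  obtain ⟨huc, hne⟩ := (sdiff_adj _ _ _ _).1 huc
  have hct : c ≠ t := by
    rintro rfl
    exact hne (edge_adj_of_ne huc.ne)
  refine ⟨hct, huc, fun d hd ↦ ?_, fun d hd ↦ hc d ?_⟩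
  · by_cases hdt : d = t
    · exact Or.inl hdt
    · refine Or.inr (hu d ⟨hd, fun he ↦ hdt ?_⟩)
      rcases ((edge_adj u t u d).1 he).1 with ⟨-, rfl⟩ | ⟨rfl, rfl⟩ <;> rfl
  · exact (sdiff_edge_adj_iff_of_ne huc.ne' hct).2 hd

lemma pendant_of_not_isolatedEdges_sdiff_edge_subset (hut : H.Adj u t)
    (h : ¬ (H \ edge u t).isolatedEdges ⊆ H.isolatedEdges) :
    (∃ c, c ≠ t ∧ H.Adj u c ∧ (∀ d, H.Adj u d → d = t ∨ d = c) ∧ ∀ d, H.Adj c d → d = u) ∨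
      ∃ c, c ≠ u ∧ H.Adj t c ∧ (∀ d, H.Adj t d → d = u ∨ d = c) ∧ ∀ d, H.Adj c d → d = t := by
  obtain ⟨e, he, heH⟩ := Set.not_subset.1 h
  have hmeet : u ∈ e ∨ t ∈ e := by
    by_contra! hout
    refine heH (mem_isolatedEdges_of_adj_iff he fun a ha c ↦ sdiff_edge_adj_iff_of_ne ?_ ?_)
    · rintro rfl; exact hout.1 ha
    · rintro rfl; exact hout.2 ha
  rcases hmeet with hu | ht
  · obtain ⟨c, rfl⟩ := Sym2.mem_iff_exists.1 hu
    exact Or.inl ⟨c, pendant_of_mk_mem_isolatedEdges_sdiff_edge he⟩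
  · obtain ⟨c, rfl⟩ := Sym2.mem_iff_exists.1 ht
    exact Or.inr ⟨c, pendant_of_mk_mem_isolatedEdges_sdiff_edge (edge_comm u t ▸ he)⟩

/-- Around `u` the graph is a spider with legs of length at most two, whose feet may have
further neighbours. -/
def IsSpiderCentre (H : SimpleGraph V) (u : V) : Prop :=
  ∀ t, H.Adj u t → ∃ z, ¬ H.Adj u z ∧ ∀ c, H.Adj t c → c = u ∨ c = z

lemma isSpiderCentre_of_mk_mem_isolatedEdges (huv : s(u, v) ∈ H.isolatedEdges) :
    H.IsSpiderCentre u := by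
  obtain ⟨-, hu, hv⟩ := mk_mem_isolatedEdges.1 huv
  intro t ht
  obtain rfl := hu t ht
  exact ⟨u, H.loopless.irrefl u, fun c hc ↦ Or.inl (hv c hc)⟩

lemma isSpiderCentre_of_forall_not_subset
    (h : ∀ t, H.Adj u t → ¬ (H \ edge u t).isolatedEdges ⊆ H.isolatedEdges) :
    H.IsSpiderCentre u := by
  intro t hut
  rcases pendant_of_not_isolatedEdges_sdiff_edge_subset hut (h t hut) with
    ⟨w, hwt, huw, hNu, hNw⟩ | ⟨z, hzu, -, hNt, hNz⟩
  · -- `N(u) = {t, w}` with `w` a leaf; deleting `uw` then forces `t` to be a leaf too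
    rcases pendant_of_not_isolatedEdges_sdiff_edge_subset huw (h w huw) with
      ⟨w', hw'w, huw', -, hNw'⟩ | ⟨z, hzu, hwz, -, -⟩
    · obtain rfl := (hNu w' huw').resolve_right hw'w
      exact ⟨u, H.loopless.irrefl u, fun c hc ↦ Or.inl (hNw' c hc)⟩
    · exact absurd (hNw z hwz) hzu
  · exact ⟨z, fun huz ↦ hut.ne (hNz u huz.symm), hNt⟩

/-- Recolour `u` avoiding the colour of `v`, and each neighbour `t` of `u` avoiding the new
colour of `u` and the colour of the only other neighbour of `t`. -/
theorem Colorable.sup_edge_of_isSpiderCentre {n : ℕ} (hH : H.Colorable n) (hn : 3 ≤ n)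
    (hu : H.IsSpiderCentre u) (huv : ¬ H.Adj u v) : (H ⊔ edge u v).Colorable n := by
  classical
  obtain ⟨C⟩ := hH
  choose! z hzu hz using hu
  obtain ⟨γ, hγ, -⟩ := Fin.exists_ne_and_ne_of_two_lt (C v) (C v) (by omega)
  choose δ hδ using fun t ↦ Fin.exists_ne_and_ne_of_two_lt γ (C (z t)) (by omega)
  let f : V → Fin n := fun a ↦ if a = u then γ else if H.Adj u a then δ a else C a
  have hfar : ∀ a, a ≠ u → ¬ H.Adj u a → f a = C a := fun a h₁ h₂ ↦ by simp [f, h₁, h₂]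
  have hnear : ∀ a c, (H ⊔ edge u v).Adj a c → (a = u ∨ H.Adj u a) → f a ≠ f c := by
    rintro a c hac (rfl | hua)
    · have hca : c ≠ a := hac.ne.symm
      rcases hac with hac | hac
      · simpa [f, hca, hac] using (hδ c).1.symm
      · obtain rfl : c = v := by
          rcases ((edge_adj _ _ _ _).1 hac).1 with ⟨-, h⟩ | ⟨h, h'⟩
          exacts [h, h'.trans h]
        simpa [f, hca, huv] using hγ
    · have hau : a ≠ u := hua.ne.symm
      rcases hac with hac | hac
      · by_cases hcu : c = u
        · subst hcu
          simpa [f, hau, hua] using (hδ a).1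
        have hcz : c = z a := (hz a hua c hac).resolve_left hcu
        rw [hfar c hcu (hcz ▸ hzu a hua)]
        simpa [f, hau, hua, hcz] using (hδ a).2
      · exact absurd ((edge_adj _ _ _ _).1 hac).1
          (by rintro (⟨h, -⟩ | ⟨rfl, -⟩); exacts [hau h, huv hua])
  refine ⟨Coloring.mk f fun {a c} hac ↦ ?_⟩
  by_cases ha : a = u ∨ H.Adj u a
  · exact hnear a c hac ha
  by_cases hc : c = u ∨ H.Adj u c
  · exact (hnear c a hac.symm hc).symm
  simp only [not_or] at ha hc
  rw [hfar a ha.1 ha.2, hfar c hc.1 hc.2]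
  rcases hac with hac | hac
  · exact C.valid hac
  · rcases ((edge_adj _ _ _ _).1 hac).1 with ⟨h, -⟩ | ⟨-, h⟩
    exacts [absurd h ha.1, absurd h hc.1]

/-- `R` (red) and `B` (blue) partition the edges of `G`, with `R` `r`-colourable and `B`
`b`-colourable. -/
structure IsColorableSplit (G : SimpleGraph V) (r b : ℕ) (R B : SimpleGraph V) : Prop where
  disjoint : Disjoint R B
  sup_eq : R ⊔ B = G
  colorable_left : R.Colorable r
  colorable_right : B.Colorable b

namespace IsColorableSplit

variable {G R B E : SimpleGraph V} {r b : ℕ}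

lemma symm (hs : IsColorableSplit G r b R B) : IsColorableSplit G b r B R :=
  ⟨hs.disjoint.symm, sup_comm R B ▸ hs.sup_eq, hs.colorable_right, hs.colorable_left⟩

lemma sup_sdiff (hs : IsColorableSplit G r b R B) (hE : E ≤ B) (hR : (R ⊔ E).Colorable r) :
    IsColorableSplit G r b (R ⊔ E) (B \ E) where
  disjoint := disjoint_sup_left.2 ⟨hs.disjoint.mono_right sdiff_le, disjoint_sdiff_self_right⟩
  sup_eq := by rw [sup_assoc, sup_sdiff_cancel_right hE, hs.sup_eq]
  colorable_left := hR
  colorable_right := hs.colorable_right.mono_left sdiff_le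

lemma not_adj_right (hs : IsColorableSplit G r b R B) {a c : V} (h : R.Adj a c) : ¬ B.Adj a c :=
  fun h' ↦ Set.disjoint_left.1 (disjoint_edgeSet.2 hs.disjoint) (show s(a, c) ∈ R.edgeSet from h) h'

lemma adj_right (hs : IsColorableSplit G r b R B) {a c : V} (hG : G.Adj a c) (hR : ¬ R.Adj a c) :
    B.Adj a c := by
  rw [← hs.sup_eq, sup_adj] at hG
  exact hG.resolve_left hR

lemma exists_ncard_lt_of_adj [Finite V] (hs : IsColorableSplit G r b R B) (hr : 3 ≤ r)
    (hb : 3 ≤ b) (huv : s(u, v) ∈ R.isolatedEdges) (hux : B.Adj u x) :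
    ∃ R' B', IsColorableSplit G r b R' B' ∧
      R'.isolatedEdges.ncard + B'.isolatedEdges.ncard <
        R.isolatedEdges.ncard + B.isolatedEdges.ncard := by
  by_cases hsafe : ∃ y, B.Adj u y ∧ (B \ edge u y).isolatedEdges ⊆ B.isolatedEdges
  · obtain ⟨y, huy, hsub⟩ := hsafe
    have hyv : y ≠ v := fun h ↦ hs.not_adj_right huv.1 (h ▸ huy)
    refine ⟨R ⊔ edge u y, B \ edge u y, hs.sup_sdiff ((edge_le_iff B).2 (Or.inr huy)) ?_, ?_⟩
    · exact hs.colorable_left.sup_edge_of_isSpiderCentre hr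
        (isSpiderCentre_of_mk_mem_isolatedEdges huv) fun h ↦ hs.not_adj_right h huy
    · have := Set.ncard_lt_ncard (isolatedEdges_sup_edge_ssubset huv huy.ne' hyv)
      have := Set.ncard_le_ncard hsub
      omega
  · push Not at hsafe
    have hxv : x ≠ v := fun h ↦ hs.not_adj_right huv.1 (h ▸ hux)
    refine ⟨R \ edge u v, B ⊔ edge u v,
      (hs.symm.sup_sdiff ((edge_le_iff R).2 (Or.inr huv.1)) ?_).symm, ?_⟩
    · exact hs.colorable_right.sup_edge_of_isSpiderCentre hb
        (isSpiderCentre_of_forall_not_subset hsafe) (hs.not_adj_right huv.1)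
    · have := Set.ncard_lt_ncard (isolatedEdges_sdiff_edge_ssubset huv)
      have := Set.ncard_le_ncard (isolatedEdges_sup_edge_subset hux hxv)
      omega

lemma exists_ncard_lt [Finite V] (hs : IsColorableSplit G r b R B) (hr : 3 ≤ r) (hb : 3 ≤ b)
    (hG : NoIsolatedEdge G) (hR : R.isolatedEdges.Nonempty) :
    ∃ R' B', IsColorableSplit G r b R' B' ∧
      R'.isolatedEdges.ncard + B'.isolatedEdges.ncard <
        R.isolatedEdges.ncard + B.isolatedEdges.ncard := by
  obtain ⟨e, he⟩ := hR
  induction e using Sym2.ind with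
  | h u v =>
    obtain ⟨huv, hu, hv⟩ := mk_mem_isolatedEdges.1 he
    have hGuv : G.Adj u v := hs.sup_eq ▸ Or.inl huv
    obtain ⟨x, ⟨hux, hxv⟩ | ⟨hvx, hxu⟩⟩ := hG u v hGuv
    · exact hs.exists_ncard_lt_of_adj hr hb he (hs.adj_right hux fun h ↦ hxv (hu x h))
    · exact hs.exists_ncard_lt_of_adj hr hb (Sym2.eq_swap ▸ he)
        (hs.adj_right hvx fun h ↦ hxu (hv x h))

theorem exists_noIsolatedEdge [Finite V] (hs : IsColorableSplit G r b R B) (hr : 3 ≤ r)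
    (hb : 3 ≤ b) (hG : NoIsolatedEdge G) :
    ∃ R' B', IsColorableSplit G r b R' B' ∧ NoIsolatedEdge R' ∧ NoIsolatedEdge B' := by
  induction hn : R.isolatedEdges.ncard + B.isolatedEdges.ncard using Nat.strong_induction_on
    generalizing R B with
  | _ n ih =>
    rcases R.isolatedEdges.eq_empty_or_nonempty with hR | hR
    · rcases B.isolatedEdges.eq_empty_or_nonempty with hB | hB
      · exact ⟨R, B, hs, noIsolatedEdge_of_isolatedEdges_eq_empty hR,
          noIsolatedEdge_of_isolatedEdges_eq_empty hB⟩
      · obtain ⟨B', R', hs', hlt⟩ := hs.symm.exists_ncard_lt hb hr hG hB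
        exact ih _ (by omega) hs'.symm rfl
    · obtain ⟨R', B', hs', hlt⟩ := hs.exists_ncard_lt hr hb hG hR
      exact ih _ (hn ▸ hlt) hs' rfl

end IsColorableSplit

end SimpleGraph

/-- If the edges of a graph without isolated edges can be 2-coloured with the red
subgraph `r`-colourable and the blue subgraph `b`-colourable (`r, b ≥ 3`), then
this can be done so that no colour class contains an isolated edge. -/
theorem stmt_2 {V : Type*} [Fintype V] (G : SimpleGraph V) (r b : ℕ)
    (hr : 3 ≤ r) (hb : 3 ≤ b) (hG : NoIsolatedEdge G)
    (R B : SimpleGraph V) (hdisj : Disjoint R B) (hsup : R ⊔ B = G)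
    (hRc : R.Colorable r) (hBc : B.Colorable b) :
    ∃ R' B' : SimpleGraph V, Disjoint R' B' ∧ R' ⊔ B' = G ∧
      R'.Colorable r ∧ B'.Colorable b ∧
      NoIsolatedEdge R' ∧ NoIsolatedEdge B' := by
  obtain ⟨R', B', ⟨hdisj', hsup', hRc', hBc'⟩, hR', hB'⟩ :=
    SimpleGraph.IsColorableSplit.exists_noIsolatedEdge ⟨hdisj, hsup, hRc, hBc⟩ hr hb hG
  exact ⟨R', B', hdisj', hsup', hRc', hBc', hR', hB'⟩
end

section
/- For every positive integer k, every graph G without isolated edges satisfying χ(G) ≤ 3^k can be decomposed into k (possibly empty) edge-disjoint subgraphs G₁, …, G_k such that for each i, χ(G_i) ≤ 3 and G_i contains no isolated edges. -/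
/-!
By induction on `k` it suffices to split a graph `G` without isolated edges and with
`χ(G) ≤ 3m` into a `3`-colourable part `A` and an `m`-colourable part `G \ A`, neither with
isolated edges. This goes by induction on `G`. A pendant edge `vx` (with `xz`, if `v - x - z` is
a component) is removed, the rest is split, and the edge goes back into the part that holds an
edge at `x`, with `v` recoloured.

Without pendant edges, take a Grundy colouring `c` with `3m` colours, in which every vertex sees
all smaller colours, and group the colours into blocks `{3j, 3j+1, 3j+2}`. Recolour by the
position in the block, except that a vertex of colour `0` with no neighbour in position `2`
moves to position `2`. Let `A` be the edges inside a block together with the properly coloured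
edges at colour `0`. Every vertex of colour at least `3` keeps its edges to the colours `1` and
`2` in `G \ A`, and the Grundy property gives every edge of `A` a neighbouring edge in `A`.
-/

open SimpleGraph

section General

variable {V : Type*} {G H : SimpleGraph V}

lemma exists_companion_mono (hle : G ≤ H) {a b : V}
    (h : ∃ x, (G.Adj a x ∧ x ≠ b) ∨ (G.Adj b x ∧ x ≠ a)) :
    ∃ x, (H.Adj a x ∧ x ≠ b) ∨ (H.Adj b x ∧ x ≠ a) :=
  let ⟨x, hx⟩ := h
  ⟨x, hx.imp (And.imp_left fun h => hle h) (And.imp_left fun h => hle h)⟩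

lemma NoIsolatedEdge.sup (hG : NoIsolatedEdge G) (hH : NoIsolatedEdge H) :
    NoIsolatedEdge (G ⊔ H) := by
  rintro a b (hab | hab)
  · exact exists_companion_mono le_sup_left (hG a b hab)
  · exact exists_companion_mono le_sup_right (hH a b hab)

lemma noIsolatedEdge_of_forall_lt (f : V → ℕ) (hf : ∀ a b, G.Adj a b → f a ≠ f b)
    (h : ∀ a b, G.Adj a b → f a < f b →
      ∃ x, (G.Adj a x ∧ x ≠ b) ∨ (G.Adj b x ∧ x ≠ a)) :
    NoIsolatedEdge G := by
  intro a b hab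
  rcases (hf a b hab).lt_or_gt with hlt | hlt
  · exact h a b hab hlt
  · obtain ⟨x, hx⟩ := h b a hab.symm hlt
    exact ⟨x, hx.symm⟩

lemma SimpleGraph.Colorable.two_le_of_adj {n : ℕ} (hG : G.Colorable n) {a b : V}
    (hab : G.Adj a b) : 2 ≤ n := by
  obtain ⟨c⟩ := hG
  have := Fin.val_ne_of_ne (c.valid hab)
  have := (c a).isLt
  have := (c b).isLt
  omega

lemma SimpleGraph.Colorable.sup_edge_of_isolated {n : ℕ} (hG : G.Colorable n) (hn : 2 ≤ n)
    {v x : V} (hv : ∀ u, ¬ G.Adj v u) : (G ⊔ edge v x).Colorable n := by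
  classical
  obtain ⟨c⟩ := hG
  obtain ⟨i, hi⟩ :=
    Fintype.exists_ne_of_one_lt_card (by simp only [Fintype.card_fin]; omega) (c x)
  have hGv : ∀ {a b}, G.Adj a b → a ≠ v := fun hab h => hv _ (h ▸ hab)
  refine ⟨Coloring.mk (Function.update c v i) ?_⟩
  rintro a b (hab | hab)
  · simpa [Function.update_of_ne (hGv hab), Function.update_of_ne (hGv hab.symm)] using
      c.valid hab
  · obtain ⟨⟨rfl, rfl⟩ | ⟨rfl, rfl⟩, hne⟩ := (edge_adj ..).1 hab
    · simpa [Function.update_of_ne hne.symm] using hi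
    · simpa [Function.update_of_ne hne] using hi.symm

lemma NoIsolatedEdge.sup_edge (hG : NoIsolatedEdge G) {v x w : V} (hxw : G.Adj x w)
    (hv : ∀ u, ¬ G.Adj v u) : NoIsolatedEdge (G ⊔ edge v x) := by
  have hwv : w ≠ v := fun h => hv x (h ▸ hxw.symm)
  rintro a b (hab | hab)
  · exact exists_companion_mono le_sup_left (hG a b hab)
  · obtain ⟨⟨rfl, rfl⟩ | ⟨rfl, rfl⟩, -⟩ := (edge_adj ..).1 hab
    · exact ⟨w, Or.inr ⟨Or.inl hxw, hwv⟩⟩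
    · exact ⟨w, Or.inl ⟨Or.inl hxw, hwv⟩⟩

lemma noIsolatedEdge_edge_sup_edge {v x z : V} (hvx : v ≠ x) (hxz : x ≠ z) (hvz : v ≠ z) :
    NoIsolatedEdge (edge z x ⊔ edge v x) := by
  have hzx : (edge z x ⊔ edge v x).Adj x z :=
    Or.inl ((edge_adj ..).2 ⟨Or.inr ⟨rfl, rfl⟩, hxz⟩)
  have hvx' : (edge z x ⊔ edge v x).Adj x v :=
    Or.inr ((edge_adj ..).2 ⟨Or.inr ⟨rfl, rfl⟩, hvx.symm⟩)
  rintro a b (hab | hab) <;> obtain ⟨⟨rfl, rfl⟩ | ⟨rfl, rfl⟩, -⟩ := (edge_adj ..).1 hab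
  · exact ⟨v, Or.inr ⟨hvx', hvz⟩⟩
  · exact ⟨v, Or.inl ⟨hvx', hvz⟩⟩
  · exact ⟨z, Or.inr ⟨hzx, hvz.symm⟩⟩
  · exact ⟨z, Or.inl ⟨hzx, hvz.symm⟩⟩

end General

section Grundy

variable {V : Type*} (G : SimpleGraph V)

structure IsGrundyColoring (c : V → ℕ) : Prop where
  ne_of_adj : ∀ {a b}, G.Adj a b → c a ≠ c b
  exists_adj : ∀ v j, j < c v → ∃ w, G.Adj v w ∧ c w = j

variable {G}

/-- A proper colouring of least total weight is Grundy: a vertex with no neighbour of some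
smaller colour could be recoloured with it. -/
theorem exists_isGrundyColoring [Fintype V] {n : ℕ} (hG : G.Colorable n) :
    ∃ c : V → ℕ, (∀ v, c v < n) ∧ IsGrundyColoring G c := by
  classical
  obtain ⟨C⟩ := hG
  let proper : Finset (V → Fin n) :=
    Finset.univ.filter fun f => ∀ a b, G.Adj a b → f a ≠ f b
  obtain ⟨f, hf, hmin⟩ := proper.exists_min_image (fun f => ∑ v, (f v : ℕ))
    ⟨C, by simpa [proper] using fun a b h => C.valid h⟩
  simp only [proper, Finset.mem_filter, Finset.mem_univ, true_and] at hf hmin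
  refine ⟨fun v => f v, fun v => (f v).isLt, fun hab h => hf _ _ hab (Fin.ext h), ?_⟩
  intro v j hj
  by_contra! hno
  set g := Function.update f v ⟨j, hj.trans (f v).isLt⟩
  have hg : ∀ a b, G.Adj a b → g a ≠ g b := by
    intro a b hab
    simp only [g, Function.update_apply]
    split_ifs with ha hb hb
    · exact absurd (ha.trans hb.symm) hab.ne
    · exact fun h => hno b (ha ▸ hab) (congrArg Fin.val h).symm
    · exact fun h => hno a (hb ▸ hab.symm) (congrArg Fin.val h)
    · exact hf a b hab
  have hlt : ∑ u, (g u : ℕ) < ∑ u, (f u : ℕ) := by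
    refine Finset.sum_lt_sum (fun u _ => ?_) ⟨v, Finset.mem_univ _, by simpa [g] using hj⟩
    by_cases hu : u = v
    · subst hu; simpa [g] using hj.le
    · simp [g, Function.update_of_ne hu]
  exact (hmin g hg).not_gt hlt

end Grundy

namespace GrundySplit

variable {V : Type*} (G : SimpleGraph V) (c : V → ℕ)

def Free (v : V) : Prop := c v = 0 ∧ ∀ w, G.Adj v w → c w % 3 ≠ 2

open Classical in
noncomputable def color (v : V) : ℕ := if Free G c v then 2 else c v % 3

def part : SimpleGraph V where
  Adj a b :=
    G.Adj a b ∧ color G c a ≠ color G c b ∧ (c a / 3 = c b / 3 ∨ c a = 0 ∨ c b = 0)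
  symm := ⟨fun _ _ h => ⟨h.1.symm, h.2.1.symm, by omega⟩⟩
  loopless := ⟨fun _ h => G.loopless.irrefl _ h.1⟩

variable {G c}

lemma part_le : part G c ≤ G := fun _ _ h => h.1

lemma color_lt (v : V) : color G c v < 3 := by
  unfold color; split_ifs <;> omega

lemma color_of_ne_zero {v : V} (hv : c v ≠ 0) : color G c v = c v % 3 := by
  simp [color, Free, hv]

lemma color_ne_one_of_eq_zero {v : V} (hv : c v = 0) : color G c v ≠ 1 := by
  unfold color; split_ifs <;> omega

lemma colorable_part : (part G c).Colorable 3 :=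
  ⟨Coloring.mk (fun v => ⟨color G c v, color_lt v⟩)
    fun h heq => h.2.1 (congrArg Fin.val heq)⟩

variable (hc : IsGrundyColoring G c)
include hc

lemma part_adj_of_free {a b : V} (ha : Free G c a) (hab : G.Adj a b) : (part G c).Adj a b := by
  have hb : c b ≠ 0 := ha.1 ▸ (hc.ne_of_adj hab).symm
  refine ⟨hab, ?_, Or.inr (Or.inl ha.1)⟩
  rw [color, if_pos ha, color_of_ne_zero hb]
  exact fun h => ha.2 b hab h.symm

lemma part_adj_of_div_eq {a b : V} (hab : G.Adj a b) (h : c a / 3 = c b / 3) :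
    (part G c).Adj a b := by
  refine ⟨hab, ?_, Or.inl h⟩
  have hne := hc.ne_of_adj hab
  wlog ha : c a = 0 generalizing a b
  · by_cases hb : c b = 0
    · exact (this hab.symm h.symm hne.symm hb).symm
    · rw [color_of_ne_zero ha, color_of_ne_zero hb]; omega
  have hb : c b ≠ 0 := ha ▸ hne.symm
  rw [color_of_ne_zero hb]
  by_cases hfree : Free G c a
  · rw [color, if_pos hfree]
    exact fun h' => hfree.2 b hab h'.symm
  · rw [color, if_neg hfree]; omega

lemma exists_part_adj_ne_of_mod_eq_two (b : V) (hb : c b % 3 = 2) (a : V) :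
    ∃ w, (part G c).Adj b w ∧ w ≠ a := by
  obtain ⟨w₁, hw₁, hc₁⟩ := hc.exists_adj b (c b - 1) (by omega)
  obtain ⟨w₂, hw₂, hc₂⟩ := hc.exists_adj b (c b - 2) (by omega)
  have hw₁₂ : w₁ ≠ w₂ := fun h => by subst h; omega
  have h₁ := part_adj_of_div_eq hc hw₁ (by omega)
  have h₂ := part_adj_of_div_eq hc hw₂ (by omega)
  by_cases h : w₁ = a
  · exact ⟨w₂, h₂, fun h' => hw₁₂ (h.trans h'.symm)⟩
  · exact ⟨w₁, h₁, h⟩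

lemma div_ne_of_sdiff_adj {a b : V} (hab : (G \ part G c).Adj a b) : c a / 3 ≠ c b / 3 :=
  fun h => hab.2 (part_adj_of_div_eq hc hab.1 h)

lemma colorable_sdiff_part {m : ℕ} (hlt : ∀ v, c v < 3 * m) : (G \ part G c).Colorable m :=
  ⟨Coloring.mk (fun v => ⟨c v / 3, by have := hlt v; omega⟩)
    fun h heq => div_ne_of_sdiff_adj hc h (congrArg Fin.val heq)⟩

lemma noIsolatedEdge_sdiff_part : NoIsolatedEdge (G \ part G c) := by
  refine noIsolatedEdge_of_forall_lt (fun v => c v / 3)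
    (fun a b h => div_ne_of_sdiff_adj hc h) ?_
  intro a b _ hlt
  have hmem : ∀ j, 0 < j → j < 3 → ∃ w, (G \ part G c).Adj b w ∧ c w = j := by
    intro j hj₀ hj₃
    obtain ⟨w, hw, hcw⟩ := hc.exists_adj b j (by omega)
    refine ⟨w, ⟨hw, fun h => ?_⟩, hcw⟩
    rcases h.2.2 with h' | h' | h' <;> omega
  obtain ⟨w₁, hw₁, hc₁⟩ := hmem 1 (by omega) (by omega)
  obtain ⟨w₂, hw₂, hc₂⟩ := hmem 2 (by omega) (by omega)
  by_cases h : w₁ = a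
  · exact ⟨w₂, Or.inr ⟨hw₂, fun h' => by subst h h'; omega⟩⟩
  · exact ⟨w₁, Or.inr ⟨hw₁, h⟩⟩

lemma exists_part_adj_of_eq_zero (hdeg : ∀ v x, G.Adj v x → ∃ w, G.Adj v w ∧ w ≠ x)
    {a b : V} (ha : c a = 0) (hab : (part G c).Adj a b) :
    ∃ x, ((part G c).Adj a x ∧ x ≠ b) ∨ ((part G c).Adj b x ∧ x ≠ a) := by
  by_cases hfree : Free G c a
  · obtain ⟨w, hw, hwb⟩ := hdeg a b hab.1
    exact ⟨w, Or.inl ⟨part_adj_of_free hc hfree hw, hwb⟩⟩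
  obtain ⟨w, hw, hw2⟩ : ∃ w, G.Adj a w ∧ c w % 3 = 2 := by
    simpa [Free, ha] using hfree
  by_cases hwb : w = b
  · obtain ⟨x, hx, hxa⟩ := exists_part_adj_ne_of_mod_eq_two hc b (hwb ▸ hw2) a
    exact ⟨x, Or.inr ⟨hx, hxa⟩⟩
  · refine ⟨w, Or.inl ⟨⟨hw, ?_, Or.inr (Or.inl ha)⟩, hwb⟩⟩
    rw [color, if_neg hfree, color_of_ne_zero (by omega)]
    omega

lemma noIsolatedEdge_part (hdeg : ∀ v x, G.Adj v x → ∃ w, G.Adj v w ∧ w ≠ x) :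
    NoIsolatedEdge (part G c) := by
  refine noIsolatedEdge_of_forall_lt c (fun a b h => hc.ne_of_adj h.1) ?_
  intro a b hab hlt
  by_cases ha : c a = 0
  · exact exists_part_adj_of_eq_zero hc hdeg ha hab
  have hdiv : c a / 3 = c b / 3 := by rcases hab.2.2 with h | h | h <;> omega
  by_cases hb : c b % 3 = 2
  · obtain ⟨x, hx, hxa⟩ := exists_part_adj_ne_of_mod_eq_two hc b hb a
    exact ⟨x, Or.inr ⟨hx, hxa⟩⟩
  -- `b` is the middle colour of its block, so its neighbour of colour `0` fits the part
  obtain ⟨x, hx, hcx⟩ := hc.exists_adj b 0 (by omega)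
  refine ⟨x, Or.inr ⟨⟨hx, ?_, Or.inr (Or.inr hcx)⟩, fun h => ha (h ▸ hcx)⟩⟩
  rw [color_of_ne_zero (by omega : c b ≠ 0)]
  have := color_ne_one_of_eq_zero (G := G) hcx
  omega

end GrundySplit

section Split

variable {V : Type*} {G : SimpleGraph V} {m : ℕ}

def HasSplit (m : ℕ) (G : SimpleGraph V) : Prop :=
  ∃ A ≤ G, A.Colorable 3 ∧ NoIsolatedEdge A ∧ (G \ A).Colorable m ∧ NoIsolatedEdge (G \ A)

lemma hasSplit_of_forall_exists_adj_ne [Fintype V] (hχ : G.Colorable (3 * m))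
    (hdeg : ∀ v x, G.Adj v x → ∃ w, G.Adj v w ∧ w ≠ x) : HasSplit m G := by
  obtain ⟨c, hlt, hc⟩ := exists_isGrundyColoring hχ
  exact ⟨_, GrundySplit.part_le, GrundySplit.colorable_part,
    GrundySplit.noIsolatedEdge_part hc hdeg, GrundySplit.colorable_sdiff_part hc hlt,
    GrundySplit.noIsolatedEdge_sdiff_part hc⟩

lemma NoIsolatedEdge.sdiff_edge (hG : NoIsolatedEdge G) {v x : V}
    (hv : ∀ u, G.Adj v u → u = x)
    (hx : ∀ z, G.Adj x z → z ≠ v → (∀ u, G.Adj x u → u = v ∨ u = z) →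
      ∃ u, G.Adj z u ∧ u ≠ x) :
    NoIsolatedEdge (G \ edge v x) := by
  have key : ∀ p q, G.Adj p q → p ≠ v → q ≠ v → (G \ edge v x).Adj p q :=
    fun p q h hp hq => ⟨h, fun h' => by rw [edge_adj] at h'; grind⟩
  have hne : ∀ p q, (G \ edge v x).Adj p q → p ≠ v := by
    rintro p q ⟨hpq, hpq'⟩ rfl
    exact hpq' ((edge_adj ..).2 ⟨Or.inl ⟨rfl, hv q hpq⟩, hpq.ne⟩)
  have side : ∀ a b, (G \ edge v x).Adj a b → ∀ y, G.Adj a y → y ≠ b →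
      ∃ t, ((G \ edge v x).Adj a t ∧ t ≠ b) ∨ ((G \ edge v x).Adj b t ∧ t ≠ a) := by
    intro a b hab y hay hyb
    by_cases hyv : y = v
    · subst hyv
      obtain rfl := hv a hay.symm
      by_cases hall : ∀ u, G.Adj a u → u = y ∨ u = b
      · obtain ⟨u, hbu, hua⟩ := hx b hab.1 (hne b a hab.symm) hall
        refine ⟨u, Or.inr ⟨key b u hbu (hne b a hab.symm) ?_, hua⟩⟩
        rintro rfl
        exact hab.1.ne (hv b hbu.symm).symm
      · push Not at hall
        obtain ⟨u, hau, huy, hub⟩ := hall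
        exact ⟨u, Or.inl ⟨key a u hau (hne a b hab) huy, hub⟩⟩
    · exact ⟨y, Or.inl ⟨key a y hay (hne a b hab) hyv, hyb⟩⟩
  intro a b hab
  obtain ⟨y, ⟨hay, hyb⟩ | ⟨hby, hya⟩⟩ := hG a b hab.1
  · exact side a b hab y hay hyb
  · obtain ⟨t, ht⟩ := side b a hab.symm y hby hya
    exact ⟨t, ht.symm⟩

lemma NoIsolatedEdge.sdiff_of_closed (hG : NoIsolatedEdge G) {K : SimpleGraph V}
    (hK : ∀ a b, G.Adj a b → (∃ u, K.Adj a u) → K.Adj a b) : NoIsolatedEdge (G \ K) := by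
  have hout : ∀ a b, (G \ K).Adj a b → ∀ u, G.Adj a u → (G \ K).Adj a u :=
    fun a b hab u hau => ⟨hau, fun h => hab.2 (hK a b hab.1 ⟨u, h⟩)⟩
  intro a b hab
  obtain ⟨y, ⟨hay, hyb⟩ | ⟨hby, hya⟩⟩ := hG a b hab.1
  · exact ⟨y, Or.inl ⟨hout a b hab y hay, hyb⟩⟩
  · exact ⟨y, Or.inr ⟨hout b a hab.symm y hby, hya⟩⟩

lemma HasSplit.of_sdiff_edge (h : HasSplit m (G \ edge v x)) (hvx : G.Adj v x)
    (hv : ∀ u, G.Adj v u → u = x) {w : V} (hxw : (G \ edge v x).Adj x w) : HasSplit m G := by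
  obtain ⟨A, hA, hA3, hAi, hB, hBi⟩ := h
  have he : edge v x ≤ G := (edge_le_iff _).2 (Or.inr hvx)
  have hv' : ∀ u, ¬ (G \ edge v x).Adj v u :=
    fun u hu => hu.2 ((edge_adj ..).2 ⟨Or.inl ⟨rfl, hv u hu.1⟩, hu.1.ne⟩)
  by_cases hxwA : A.Adj x w
  · refine ⟨A ⊔ edge v x, sup_le (hA.trans sdiff_le) he,
      hA3.sup_edge_of_isolated (by norm_num) fun u hu => hv' u (hA hu),
      hAi.sup_edge hxwA fun u hu => hv' u (hA hu), ?_⟩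
    rw [sup_comm, ← sdiff_sdiff_left]
    exact ⟨hB, hBi⟩
  · have hxwB : ((G \ edge v x) \ A).Adj x w := ⟨hxw, hxwA⟩
    have hdisj : Disjoint (edge v x) A := (disjoint_sdiff_self_left.mono_left hA).symm
    have hGA : G \ A = (G \ edge v x) \ A ⊔ edge v x := by
      conv_lhs => rw [← sdiff_sup_cancel he]
      rw [sup_sdiff, hdisj.sdiff_eq_left]
    refine ⟨A, hA.trans sdiff_le, hA3, hAi, ?_⟩
    rw [hGA]
    exact ⟨hB.sup_edge_of_isolated (hB.two_le_of_adj hxwB) fun u hu => hv' u hu.1,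
      hBi.sup_edge hxwB fun u hu => hv' u hu.1⟩

lemma HasSplit.of_sdiff_path {v x z : V} (h : HasSplit m (G \ (edge z x ⊔ edge v x)))
    (hvx : G.Adj v x) (hxz : G.Adj x z) (hvz : v ≠ z) (hv : ∀ u, G.Adj v u → u = x)
    (hx : ∀ u, G.Adj x u → u = v ∨ u = z) (hz : ∀ u, G.Adj z u → u = x) :
    HasSplit m G := by
  obtain ⟨A, hA, hA3, hAi, hB, hBi⟩ := h
  have hout : ∀ a u, A.Adj a u → a ≠ v ∧ a ≠ x ∧ a ≠ z := by
    intro a u hau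
    have hGau := hA hau
    have := hau.ne
    simp only [sdiff_adj, sup_adj, edge_adj] at hGau
    grind
  refine ⟨A ⊔ (edge z x ⊔ edge v x), sup_le (hA.trans sdiff_le)
      (sup_le ((edge_le_iff _).2 (Or.inr hxz.symm)) ((edge_le_iff _).2 (Or.inr hvx))), ?_,
      hAi.sup (noIsolatedEdge_edge_sup_edge hvx.ne hxz.ne hvz), ?_⟩
  · rw [← sup_assoc]
    refine (hA3.sup_edge_of_isolated (by norm_num) fun u hu => (hout z u hu).2.2 rfl)
      |>.sup_edge_of_isolated (by norm_num) ?_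
    rintro u (hu | hu)
    · exact (hout v u hu).1 rfl
    · rw [edge_adj] at hu
      grind
  · rw [sup_comm, ← sdiff_sdiff_left]
    exact ⟨hB, hBi⟩

theorem hasSplit_of_colorable [Fintype V] (hχ : G.Colorable (3 * m)) (hG : NoIsolatedEdge G) :
    HasSplit m G := by
  induction G using WellFoundedLT.induction with | _ G ih
  by_cases hleaf : ∃ v x, G.Adj v x ∧ ∀ w, G.Adj v w → w = x
  swap
  · push Not at hleaf
    exact hasSplit_of_forall_exists_adj_ne hχ hleaf
  obtain ⟨v, x, hvx, hv⟩ := hleaf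
  by_cases hpath : ∃ z, G.Adj x z ∧ z ≠ v ∧ (∀ u, G.Adj x u → u = v ∨ u = z) ∧
      ∀ u, G.Adj z u → u = x
  · obtain ⟨z, hxz, hzv, hx, hz⟩ := hpath
    set K := edge z x ⊔ edge v x
    have hKG : K ≤ G :=
      sup_le ((edge_le_iff _).2 (Or.inr hxz.symm)) ((edge_le_iff _).2 (Or.inr hvx))
    have hK : K ≠ ⊥ :=
      ne_bot_iff_exists_adj.2
        ⟨v, x, Or.inr ((edge_adj ..).2 ⟨Or.inl ⟨rfl, rfl⟩, hvx.ne⟩)⟩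
    have hclosed : ∀ a b, G.Adj a b → (∃ u, K.Adj a u) → K.Adj a b := by
      rintro a b hab ⟨u, hu⟩
      simp only [K, sup_adj, edge_adj] at hu ⊢
      have := hv b; have := hx b; have := hz b; have := hab.ne
      grind
    exact (ih _ (sdiff_lt hKG hK) (hχ.mono_left sdiff_le) (hG.sdiff_of_closed hclosed))
      |>.of_sdiff_path hvx hxz hzv.symm hv hx hz
  · push Not at hpath
    obtain ⟨w, hw⟩ : ∃ w, (G \ edge v x).Adj x w := by
      obtain ⟨w, ⟨hvw, hwx⟩ | ⟨hxw, hwv⟩⟩ := hG v x hvx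
      · exact absurd (hv w hvw) hwx
      · exact ⟨w, hxw, fun h => by rw [edge_adj] at h; grind⟩
    have he : edge v x ≤ G := (edge_le_iff _).2 (Or.inr hvx)
    have hne : edge v x ≠ ⊥ :=
      ne_bot_iff_exists_adj.2 ⟨v, x, (edge_adj ..).2 ⟨Or.inl ⟨rfl, rfl⟩, hvx.ne⟩⟩
    exact (ih _ (sdiff_lt he hne) (hχ.mono_left sdiff_le) (hG.sdiff_edge hv hpath))
      |>.of_sdiff_edge hvx hv hw

end Split

lemma decomposition_cons {V : Type*} {G A : SimpleGraph V} {k : ℕ}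
    {g : Fin k → SimpleGraph V} (hA : A ≤ G) (hg : ∀ i, g i ≤ G \ A)
    (hgE : ∀ e ∈ (G \ A).edgeSet, ∃! i, e ∈ (g i).edgeSet) :
    (∀ i, (Fin.cons A g : Fin (k + 1) → SimpleGraph V) i ≤ G) ∧
      ∀ e ∈ G.edgeSet,
        ∃! i, e ∈ ((Fin.cons A g : Fin (k + 1) → SimpleGraph V) i).edgeSet := by
  refine ⟨Fin.forall_fin_succ.2 ⟨hA, fun i => (hg i).trans sdiff_le⟩, fun e he => ?_⟩
  have hgA : ∀ i, e ∈ (g i).edgeSet → e ∉ A.edgeSet := fun i hi =>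
    (edgeSet_sdiff .. ▸ edgeSet_mono (hg i) hi).2
  by_cases heA : e ∈ A.edgeSet
  · refine ⟨0, heA, Fin.forall_fin_succ.2 ⟨fun _ => rfl, fun i hi => ?_⟩⟩
    exact absurd heA (hgA i hi)
  · obtain ⟨i, hi, huniq⟩ := hgE e (by rw [edgeSet_sdiff]; exact ⟨he, heA⟩)
    refine ⟨i.succ, hi, Fin.forall_fin_succ.2 ⟨fun h => absurd h heA, fun j hj => ?_⟩⟩
    exact congrArg Fin.succ (huniq j hj)

/-- Every graph without isolated edges with `χ(G) ≤ 3^k` decomposes into `k`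
subgraphs, each 3-colourable and without isolated edges. -/
theorem stmt_3 {V : Type*} [Fintype V] (k : ℕ) (hk : 1 ≤ k) (G : SimpleGraph V)
    (hχ : G.Colorable (3 ^ k)) (hG : NoIsolatedEdge G) :
    ∃ f : Fin k → SimpleGraph V, (∀ i, f i ≤ G) ∧
      (∀ e ∈ G.edgeSet, ∃! i, e ∈ (f i).edgeSet) ∧
      (∀ i, (f i).Colorable 3 ∧ NoIsolatedEdge (f i)) := by
  induction k, hk using Nat.le_induction generalizing G with
  | base =>
    exact ⟨fun _ => G, fun _ => le_rfl, fun e he => ⟨0, he, fun i _ => Subsingleton.elim i 0⟩,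
      fun _ => ⟨by simpa using hχ, hG⟩⟩
  | succ k _ ih =>
    obtain ⟨A, hA, hA3, hAi, hB, hBi⟩ := hasSplit_of_colorable (by rwa [pow_succ'] at hχ) hG
    obtain ⟨g, hg, hgE, hgood⟩ := ih (G \ A) hB hBi
    obtain ⟨hle, hE⟩ := decomposition_cons hA hg hgE
    exact ⟨Fin.cons A g, hle, hE, Fin.forall_fin_succ.2 ⟨⟨hA3, hAi⟩, hgood⟩⟩
end

section
/- Every graph G without isolated edges admits a neighbour-sum-distinguishing edge weighting with weights from {1,2,3} whenever G is 3-colourable; more precisely, if χ(G) ≤ 3 and G has no K₂-component, then there exists ω : E(G) → {1,2,3} such that for every edge uv, the sum of weights of edges incident with u differs from the sum of weights of edges incident with v. -/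
namespace Aux123

lemma mem_range_of_dual {K M N : Type*} [Field K] [AddCommGroup M] [Module K M]
    [AddCommGroup N] [Module K N] (f : M →ₗ[K] N) (t : N)
    (h : ∀ g : Module.Dual K N, (∀ m, g (f m) = 0) → g t = 0) :
    t ∈ LinearMap.range f := by
  by_contra ht
  have hq : (LinearMap.range f).mkQ t ≠ 0 := by
    simpa [Submodule.Quotient.mk_eq_zero] using ht
  rw [Ne, ← Module.forall_dual_apply_eq_zero_iff K, not_forall] at hq
  obtain ⟨φ, hφ⟩ := hq
  refine hφ (h (φ.comp (LinearMap.range f).mkQ) fun m => ?_)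
  have : (LinearMap.range f).mkQ (f m) = 0 := by
    simp [Submodule.Quotient.mk_eq_zero]
  simp [this]

lemma exists_x0x1 : ∀ m : ZMod 3, ∃ x0 x1 : ZMod 3, x0 ≠ 0 ∧ x1 ≠ 0 ∧ x0 + x1 + m = 0 := by
  decide


section
variable {V : Type*} [DecidableEq V]

open Classical in
lemma auxA (A B : Finset V) (hd : Disjoint A B) (hA : 2 ≤ A.card ∨ B = ∅) :
    ∃ t : V → ZMod 3, (∀ a ∈ A, ∀ b ∈ B, t a ≠ t b) ∧ ∑ v ∈ A, t v = ∑ v ∈ B, t v := by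
  rcases hA with hA | rfl
  swap
  · exact ⟨fun _ => 0, by simp, by simp⟩
  obtain ⟨a0, ha0, a1, ha1, hne⟩ := Finset.one_lt_card.mp hA
  obtain ⟨x0, x1, hx0, hx1, hsum⟩ :=
    exists_x0x1 ((((A.erase a0).erase a1).card : ℕ) : ZMod 3)
  refine ⟨fun v => if v = a0 then x0 else if v = a1 then x1 else if v ∈ A then 1 else 0,
    ?_, ?_⟩
  · intro a ha b hb
    have hbA : b ∉ A := fun h => (Finset.disjoint_left.mp hd h) hb
    have hb0 : b ≠ a0 := fun h => hbA (h ▸ ha0)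
    have hb1 : b ≠ a1 := fun h => hbA (h ▸ ha1)
    simp only [if_neg hb0, if_neg hb1, if_neg hbA]
    by_cases h0 : a = a0
    · rw [if_pos h0]; exact hx0
    by_cases h1 : a = a1
    · rw [if_neg h0, if_pos h1]; exact hx1
    · rw [if_neg h0, if_neg h1, if_pos ha]; exact one_ne_zero
  · have hB : ∀ b ∈ B, (if b = a0 then x0 else if b = a1 then x1
        else if b ∈ A then (1 : ZMod 3) else 0) = 0 := by
      intro b hb
      have hbA : b ∉ A := fun h => (Finset.disjoint_left.mp hd h) hb
      have hb0 : b ≠ a0 := fun h => hbA (h ▸ ha0)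
      have hb1 : b ≠ a1 := fun h => hbA (h ▸ ha1)
      simp [hb0, hb1, hbA]
    rw [Finset.sum_eq_zero hB]
    have ha1' : a1 ∈ A.erase a0 := Finset.mem_erase.mpr ⟨fun h => hne h.symm, ha1⟩
    rw [← Finset.add_sum_erase A _ ha0, ← Finset.add_sum_erase (A.erase a0) _ ha1']
    have hrest : ∑ v ∈ (A.erase a0).erase a1,
        (if v = a0 then x0 else if v = a1 then x1 else if v ∈ A then (1 : ZMod 3) else 0)
        = (((A.erase a0).erase a1).card : ZMod 3) := by
      rw [Finset.sum_congr rfl (fun v hv => ?_), Finset.sum_const, nsmul_eq_mul, mul_one]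
      obtain ⟨hv1, hv0, hvA⟩ : v ≠ a1 ∧ v ≠ a0 ∧ v ∈ A := by
        have h1 := Finset.mem_erase.mp hv
        have h2 := Finset.mem_erase.mp h1.2
        exact ⟨h1.1, h2.1, h2.2⟩
      rw [if_neg hv0, if_neg hv1, if_pos hvA]
    rw [hrest, if_pos rfl, if_neg (fun h => hne h.symm), if_pos rfl]
    linear_combination hsum


open Classical in
lemma lemB (A B : Finset V) (hd : Disjoint A B) (h11 : ¬(A.card = 1 ∧ B.card = 1)) :
    ∃ t : V → ZMod 3, (∀ a ∈ A, ∀ b ∈ B, t a ≠ t b) ∧ ∑ v ∈ A, t v = ∑ v ∈ B, t v := by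
  by_cases hB : B = ∅
  · exact auxA A B hd (Or.inr hB)
  by_cases hA2 : 2 ≤ A.card
  · exact auxA A B hd (Or.inl hA2)
  have hflip : 2 ≤ B.card ∨ A = ∅ := by
    interval_cases hA : A.card
    · exact Or.inr (Finset.card_eq_zero.mp hA)
    · refine Or.inl ?_
      have h1 : B.card ≠ 1 := fun h => h11 ⟨rfl, h⟩
      have h0 : B.card ≠ 0 := fun h => hB (Finset.card_eq_zero.mp h)
      omega
  obtain ⟨t, h1, h2⟩ := auxA B A hd.symm hflip
  exact ⟨t, fun a ha b hb => (h1 b hb a ha).symm, h2.symm⟩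


end

section
variable {V : Type*} [Fintype V] (G : SimpleGraph V)

/-- `y` is in the kernel of the transposed incidence map. -/
def Kpred (y : V → ZMod 3) : Prop :=
  ∀ u v, G.Adj u v → y u + y v = 0

open Classical in
/-- The incidence linear map. -/
noncomputable def fmap : (Sym2 V → ZMod 3) →ₗ[ZMod 3] (V → ZMod 3) where
  toFun w := fun v => ∑ e ∈ G.incidenceFinset v, w e
  map_add' w w' := by funext v; simp [Finset.sum_add_distrib]
  map_smul' r w := by funext v; simp [Finset.mul_sum]


variable {G}

open Classical in
lemma fmap_single {u v : V} (h : G.Adj u v) :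
    fmap G (fun e' => if e' = s(u, v) then 1 else 0)
      = (fun x => (if x = u then (1 : ZMod 3) else 0) + (if x = v then 1 else 0)) := by
  funext x
  classical
  simp only [fmap, LinearMap.coe_mk, AddHom.coe_mk]
  rw [Finset.sum_ite_eq' (G.incidenceFinset x) (s(u,v)) (fun _ => (1 : ZMod 3))]
  by_cases hx : s(u,v) ∈ G.incidenceFinset x
  · rw [if_pos hx]
    rw [SimpleGraph.mem_incidenceFinset] at hx
    have hmem : x ∈ s(u,v) := hx.2
    rw [Sym2.mem_iff] at hmem
    rcases hmem with rfl | rfl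
    · rw [if_pos rfl, if_neg h.ne, add_zero]
    · rw [if_neg h.ne', if_pos rfl, zero_add]
  · rw [if_neg hx]
    rw [SimpleGraph.mem_incidenceFinset] at hx
    have hxu : x ≠ u := by rintro rfl; exact hx ⟨h, Sym2.mem_mk_left _ _⟩
    have hxv : x ≠ v := by rintro rfl; exact hx ⟨h, Sym2.mem_mk_right _ _⟩
    simp [hxu, hxv]


open Classical in
lemma fmap_apply (w : Sym2 V → ZMod 3) (x : V) :
    fmap G w x = ∑ e ∈ G.incidenceFinset x, w e := rfl

set_option linter.unusedSectionVars false in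
lemma kpred_walk {y : V → ZMod 3} (hy : Kpred G y) {u v : V} (p : G.Walk u v) :
    y v = (-1) ^ p.length * y u := by
  induction p with
  | nil => simp
  | @cons a b c hab p ih =>
      have hb : y b = - y a := by
        have := hy a b hab; linear_combination this
      rw [ih, hb, SimpleGraph.Walk.length_cons, pow_succ]
      ring

open Classical in
lemma exists_target (G : SimpleGraph V) (hχ : G.Colorable 3) (hG : NoIsolatedEdge G) :
    ∃ t : V → ZMod 3, (∀ u v, G.Adj u v → t u ≠ t v) ∧
      ∀ z : V → ZMod 3, Kpred G z → ∑ v, z v * t v = 0 := by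
  classical
  obtain ⟨col⟩ := hχ
  set c : V → ZMod 3 := fun v => ((col v).val : ZMod 3) with hc_def
  have hc : ∀ u v, G.Adj u v → c u ≠ c v := by
    intro u v huv h
    apply col.valid huv
    have h1 : ((col u).val : ZMod 3).val = ((col v).val : ZMod 3).val := congrArg ZMod.val h
    rw [ZMod.val_cast_of_lt (col u).isLt, ZMod.val_cast_of_lt (col v).isLt] at h1
    exact Fin.ext h1
  set comp : V → G.ConnectedComponent := fun v => G.connectedComponentMk v with hcomp_def
  set P : G.ConnectedComponent → Prop :=
    fun C => ∃ y, Kpred G y ∧ ∃ v, comp v = C ∧ y v ≠ 0 with hP_def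
  -- a normalized kernel element for each component
  have step1 : ∀ C, ∃ y : V → ZMod 3,
      (P C → Kpred G y ∧ ∃ v0, comp v0 = C ∧ y v0 = 1) ∧ (¬P C → y = 0) := by
    intro C
    by_cases h : P C
    · obtain ⟨y, hy, v, hv, hnz⟩ := h
      refine ⟨(y v)⁻¹ • y, fun _ => ⟨?_, v, hv, ?_⟩, fun h' => absurd ⟨y, hy, v, hv, hnz⟩ h'⟩
      · intro a b hab
        have := hy a b hab
        simp only [Pi.smul_apply, smul_eq_mul]
        linear_combination (y v)⁻¹ * this
      · simp [inv_mul_cancel₀ hnz]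
    · exact ⟨0, fun h' => absurd h' h, fun _ => rfl⟩
  choose y hy hy0 using step1
  -- key structure of components carrying a nonzero kernel element
  have key : ∀ C, P C → ∃ v0, comp v0 = C ∧ y C v0 = 1 ∧
      ∀ v, comp v = C → (y C v = 1 ∨ y C v = -1) ∧
        ∀ z, Kpred G z → z v = z v0 * y C v := by
    intro C hPC
    obtain ⟨hk, v0, hv0, h1⟩ := hy C hPC
    refine ⟨v0, hv0, h1, fun v hv => ?_⟩
    have hr : G.Reachable v0 v := SimpleGraph.ConnectedComponent.exact
      (show G.connectedComponentMk v0 = G.connectedComponentMk v from hv0.trans hv.symm)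
    obtain ⟨p⟩ := hr
    have hYv : y C v = (-1) ^ p.length := by rw [kpred_walk hk p, h1, mul_one]
    constructor
    · rw [hYv]
      rcases Nat.even_or_odd p.length with he | ho
      · exact Or.inl he.neg_one_pow
      · exact Or.inr ho.neg_one_pow
    · intro z hz
      rw [kpred_walk hz p, hYv]
      ring
  set A : G.ConnectedComponent → Finset V :=
    fun C => Finset.univ.filter (fun v => comp v = C ∧ y C v = 1) with hA_def
  set B : G.ConnectedComponent → Finset V :=
    fun C => Finset.univ.filter (fun v => comp v = C ∧ y C v = -1) with hB_def
  have hdisj : ∀ C, Disjoint (A C) (B C) := by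
    intro C
    rw [Finset.disjoint_left]
    intro a ha hb
    rw [hA_def, Finset.mem_filter] at ha
    rw [hB_def, Finset.mem_filter] at hb
    have : (1 : ZMod 3) = -1 := ha.2.2 ▸ hb.2.2
    exact absurd this (by decide)
  -- no component consists of exactly an isolated edge
  have h11 : ∀ C, ¬(((A C).card = 1) ∧ ((B C).card = 1)) := by
    rintro C ⟨hA1, hB1⟩
    obtain ⟨a, ha⟩ := Finset.card_eq_one.mp hA1
    obtain ⟨b, hb⟩ := Finset.card_eq_one.mp hB1
    have haA : a ∈ A C := ha ▸ Finset.mem_singleton_self a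
    have hbB : b ∈ B C := hb ▸ Finset.mem_singleton_self b
    rw [hA_def, Finset.mem_filter] at haA
    rw [hB_def, Finset.mem_filter] at hbB
    have hPC : P C := by
      by_contra hPC
      rw [hy0 C hPC] at haA
      exact one_ne_zero (haA.2.2.symm : (1 : ZMod 3) = 0)
    obtain ⟨v0, hv0, h1, hmain⟩ := key C hPC
    have hfiber : ∀ v, comp v = C → v = a ∨ v = b := by
      intro v hv
      rcases (hmain v hv).1 with h | h
      · left
        have : v ∈ A C := by
          rw [hA_def, Finset.mem_filter]; exact ⟨Finset.mem_univ v, hv, h⟩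
        rw [ha, Finset.mem_singleton] at this; exact this
      · right
        have : v ∈ B C := by
          rw [hB_def, Finset.mem_filter]; exact ⟨Finset.mem_univ v, hv, h⟩
        rw [hb, Finset.mem_singleton] at this; exact this
    have hab : a ≠ b := by
      intro h
      rw [← h] at hbB
      have : (1 : ZMod 3) = -1 := haA.2.2 ▸ hbB.2.2
      exact absurd this (by decide)
    have hcompadj : ∀ {p q : V}, G.Adj p q → comp p = comp q := by
      intro p q hpq
      exact SimpleGraph.ConnectedComponent.sound hpq.reachable
    have hadj : G.Adj a b := by
      have hr : G.Reachable a b := SimpleGraph.ConnectedComponent.exact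
        (show G.connectedComponentMk a = G.connectedComponentMk b from
          haA.2.1.trans hbB.2.1.symm)
      obtain ⟨p⟩ := hr
      cases p with
      | nil => exact absurd rfl hab
      | @cons _ x _ hax q =>
          rcases hfiber x ((hcompadj hax).symm.trans haA.2.1) with rfl | rfl
          · exact absurd rfl hax.ne'
          · exact hax
    obtain ⟨x, hx⟩ := hG a b hadj
    rcases hx with ⟨hax, hxb⟩ | ⟨hbx, hxa⟩
    · rcases hfiber x ((hcompadj hax).symm.trans haA.2.1) with rfl | rfl
      · exact hax.ne rfl
      · exact hxb rfl
    · rcases hfiber x ((hcompadj hbx).symm.trans hbB.2.1) with rfl | rfl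
      · exact hxa rfl
      · exact hbx.ne rfl
  -- choose the per-component colourings
  have step2 : ∀ C, ∃ tc : V → ZMod 3,
      (∀ a ∈ A C, ∀ b ∈ B C, tc a ≠ tc b) ∧ ∑ v ∈ A C, tc v = ∑ v ∈ B C, tc v :=
    fun C => lemB (A C) (B C) (hdisj C) (h11 C)
  choose tc htcross htsum using step2
  refine ⟨fun v => if P (comp v) then tc (comp v) v else c v, ?_, ?_⟩
  · -- properness
    intro u v huv
    show (if P (comp u) then tc (comp u) u else c u) ≠ (if P (comp v) then tc (comp v) v else c v)
    have hcomp : comp u = comp v := SimpleGraph.ConnectedComponent.sound huv.reachable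
    by_cases hPC : P (comp u)
    · rw [if_pos hPC, if_pos (hcomp ▸ hPC), ← hcomp]
      obtain ⟨v0, hv0, h1, hmain⟩ := key (comp u) hPC
      have hu := (hmain u rfl).1
      have hv := (hmain v hcomp.symm).1
      have hKy : Kpred G (y (comp u)) := (hy _ hPC).1
      have hsum0 := hKy u v huv
      rcases hu with hu1 | hu1
      · have hv1 : y (comp u) v = -1 := by linear_combination hsum0 - hu1
        refine htcross (comp u) u ?_ v ?_
        · rw [hA_def, Finset.mem_filter]; exact ⟨Finset.mem_univ u, rfl, hu1⟩
        · rw [hB_def, Finset.mem_filter]; exact ⟨Finset.mem_univ v, hcomp.symm, hv1⟩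
      · have hv1 : y (comp u) v = 1 := by
          rcases hv with h | h
          · exact h
          · exfalso
            rw [hu1, h] at hsum0
            exact absurd hsum0 (by decide)
        refine fun h => htcross (comp u) v ?_ u ?_ h.symm
        · rw [hA_def, Finset.mem_filter]; exact ⟨Finset.mem_univ v, hcomp.symm, hv1⟩
        · rw [hB_def, Finset.mem_filter]; exact ⟨Finset.mem_univ u, rfl, hu1⟩
    · rw [if_neg hPC, if_neg (hcomp ▸ hPC)]
      exact hc u v huv
  · -- orthogonality to the kernel
    intro z hz
    rw [← Finset.sum_fiberwise Finset.univ comp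
      (fun v => z v * (if P (comp v) then tc (comp v) v else c v))]
    refine Finset.sum_eq_zero fun C _ => ?_
    by_cases hPC : P C
    · obtain ⟨v0, hv0, h1, hmain⟩ := key C hPC
      have hsplit : Finset.univ.filter (fun v => comp v = C) = A C ∪ B C := by
        ext v
        simp only [hA_def, hB_def, Finset.mem_filter, Finset.mem_univ, true_and,
          Finset.mem_union]
        constructor
        · intro hv
          rcases (hmain v hv).1 with h | h
          · exact Or.inl ⟨hv, h⟩
          · exact Or.inr ⟨hv, h⟩
        · rintro (⟨hv, -⟩ | ⟨hv, -⟩) <;> exact hv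
      rw [hsplit, Finset.sum_union (hdisj C)]
      have hAsum : ∀ v ∈ A C, z v * (if P (comp v) then tc (comp v) v else c v)
          = z v0 * tc C v := by
        intro v hvA
        rw [hA_def, Finset.mem_filter] at hvA
        obtain ⟨-, hv, h1v⟩ := hvA
        rw [hv, if_pos hPC, (hmain v hv).2 z hz, h1v, mul_one]
      have hBsum : ∀ v ∈ B C, z v * (if P (comp v) then tc (comp v) v else c v)
          = -(z v0) * tc C v := by
        intro v hvB
        rw [hB_def, Finset.mem_filter] at hvB
        obtain ⟨-, hv, h1v⟩ := hvB
        rw [hv, if_pos hPC, (hmain v hv).2 z hz, h1v]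
        ring
      rw [Finset.sum_congr rfl hAsum, Finset.sum_congr rfl hBsum,
        ← Finset.mul_sum, ← Finset.mul_sum, htsum C]
      ring
    · refine Finset.sum_eq_zero fun v hv => ?_
      rw [Finset.mem_filter] at hv
      have hzv : z v = 0 := by
        by_contra hzv
        apply hPC
        refine ⟨fun w => if comp w = C then z w else 0, ?_, v, hv.2, ?_⟩
        · intro p q hpq
          have h2 : comp p = comp q := SimpleGraph.ConnectedComponent.sound hpq.reachable
          show (if comp p = C then z p else 0) + (if comp q = C then z q else 0) = 0
          by_cases hp : comp p = C
          · rw [if_pos hp, if_pos (h2 ▸ hp)]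
            exact hz p q hpq
          · rw [if_neg hp, if_neg (h2 ▸ hp), add_zero]
        · show (if comp v = C then z v else 0) ≠ 0
          rw [if_pos hv.2]; exact hzv
      rw [hzv, zero_mul]


end

end Aux123

/-- Karoński–Łuczak–Thomason: every 3-colourable graph without isolated edges
fulfills the 1–2–3 Conjecture. -/
theorem stmt_4 {V : Type*} [Fintype V] (G : SimpleGraph V)
    (hχ : G.Colorable 3) (hG : NoIsolatedEdge G) :
    Fulfills123 G := by
  classical
  obtain ⟨t, ht1, ht2⟩ := Aux123.exists_target G hχ hG
  have hrange : t ∈ LinearMap.range (Aux123.fmap G) := by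
    apply Aux123.mem_range_of_dual
    intro g hg
    have hK : Aux123.Kpred G (fun v => g (fun j => if v = j then 1 else 0)) := by
      intro u v huv
      have h2 := hg (fun e' => if e' = s(u, v) then 1 else 0)
      rw [Aux123.fmap_single huv] at h2
      have h3 : (fun x => (if x = u then (1 : ZMod 3) else 0) + (if x = v then 1 else 0))
          = (fun j => if u = j then (1 : ZMod 3) else 0)
            + (fun j => if v = j then (1 : ZMod 3) else 0) := by
        funext x
        simp only [Pi.add_apply]
        congr 1 <;> simp [eq_comm]
      rw [h3, map_add] at h2
      exact h2
    have h5 := ht2 _ hK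
    rw [LinearMap.pi_apply_eq_sum_univ g t]
    rw [Finset.sum_congr rfl (fun i _ => (by rw [smul_eq_mul, mul_comm] :
      t i • g (fun j => if i = j then (1 : ZMod 3) else 0)
        = g (fun j => if i = j then (1 : ZMod 3) else 0) * t i))]
    exact h5
  obtain ⟨w0, hw0⟩ := hrange
  set W : Sym2 V → ℕ := fun e => if w0 e = 0 then 3 else (w0 e).val with hW_def
  have hcastW : ∀ e, ((W e : ℕ) : ZMod 3) = w0 e := by
    intro e
    rw [hW_def]
    by_cases h : w0 e = 0
    · simp only [if_pos h, h]
      exact ZMod.natCast_self 3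
    · simp only [if_neg h]
      rw [ZMod.natCast_val, ZMod.cast_id]
  have hwdeg : ∀ x : V, ((wdeg G W x : ℕ) : ZMod 3) = t x := by
    intro x
    have h1 : wdeg G W x = ∑ e ∈ G.incidenceFinset x, W e := rfl
    rw [h1, Nat.cast_sum, Finset.sum_congr rfl (fun e _ => hcastW e),
      ← Aux123.fmap_apply w0 x, hw0]
  refine ⟨W, ?_, ?_⟩
  · intro e _
    rw [hW_def]
    by_cases h : w0 e = 0
    · right; right; simp only [if_pos h]
    · have h1 : (w0 e).val < 3 := ZMod.val_lt _
      have h2 : (w0 e).val ≠ 0 := fun hh => h ((ZMod.val_eq_zero _).mp hh)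
      simp only [if_neg h]
      omega
  · intro u v huv hne
    apply ht1 u v huv
    rw [← hwdeg u, ← hwdeg v, hne]
end

section
/- The vertex set of every d-regular graph G with d ≥ 14 and d ∉ {15, 17} can be partitioned into sets V₀ and V₁ such that, writing r ∈ {0,1} for the residue of d mod 2: every vertex v ∈ V₀ has at least 2 + r neighbours in V₀ and at least 2 neighbours in V₁, and every vertex v ∈ V₁ has at least 2 + r neighbours in V₁ and at least 2 neighbours in V₀. -/
/-!
Colour the vertices uniformly at random with two colours and call `v` bad when it has fewer than
`2 + r` neighbours of its own colour or fewer than `2` of the other colour. Once the colour of `v`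
is fixed, this is an event about the `d` neighbours alone, so `v` is bad with probability at most
`(∑_{k < 2 + r} C(d, k) + (d + 1)) / 2 ^ d`. Badness of `v` depends only on the colours of its
closed neighbourhood, which meets the closed neighbourhoods of at most `d²` other vertices. The
variable version of the Lovász Local Lemma with weight `x = 1 / (2 d²)` (or `x = 1 / 197` when
`d = 14`) then yields a colouring without bad vertices; its colour classes are `V₀` and `V₁`.
-/

open Finset

section Independence

variable {V α : Type*} [Fintype V] [DecidableEq V] [Fintype α] [DecidableEq α]

theorem Finset.card_inter_mul_card_eq_of_dependsOn {E F : Finset (V → α)} {s t : Set V}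
    (hE : DependsOn (· ∈ E) s) (hF : DependsOn (· ∈ F) t) (hst : Disjoint s t) :
    #(E ∩ F) * Fintype.card (V → α) = #E * #F := by
  classical
  -- Swapping the `s`-coordinates of two outcomes is an involution of pairs of outcomes carrying
  -- `(E ∩ F) × univ` onto `E × F`.
  let swap : (V → α) × (V → α) → (V → α) × (V → α) :=
    fun p => (s.piecewise p.1 p.2, s.piecewise p.2 p.1)
  have hswap : Function.Involutive swap := by
    rintro ⟨f, g⟩
    ext x <;> by_cases hx : x ∈ s <;> simp [swap, hx]
  rw [← Finset.card_univ, ← card_product, ← card_product]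
  refine card_equiv hswap.toPerm fun p => ?_
  have h₁ : (s.piecewise p.1 p.2 ∈ E) = (p.1 ∈ E) :=
    hE fun x hx => Set.piecewise_eq_of_mem _ _ _ hx
  have h₂ : (s.piecewise p.2 p.1 ∈ F) = (p.1 ∈ F) :=
    hF fun x hx => Set.piecewise_eq_of_notMem _ _ _ (hst.notMem_of_mem_right hx)
  simp [swap, h₁, h₂]

theorem Finset.dens_inter_of_dependsOn {E F : Finset (V → α)} {s t : Set V}
    (hE : DependsOn (· ∈ E) s) (hF : DependsOn (· ∈ F) t) (hst : Disjoint s t) :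
    (E ∩ F).dens = E.dens * F.dens := by
  have h := card_inter_mul_card_eq_of_dependsOn hE hF hst
  obtain h0 | hΩ := eq_or_ne (Fintype.card (V → α)) 0
  · simp [dens, h0]
  simp only [dens]
  field_simp
  exact_mod_cast h

end Independence

section Counting

variable {V : Type*} [Fintype V] [DecidableEq V]

theorem card_filter_card_filter_eq (N : Finset V) (c : Bool) (k : ℕ) :
    #{f : V → Bool | #{u ∈ N | f u = c} = k} = (#N).choose k * 2 ^ (Fintype.card V - #N) := by
  -- `f` is determined by its sets of `c`-coloured vertices inside and outside `N`.
  rw [← card_powersetCard, ← card_compl, ← card_powerset, ← card_product]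
  refine card_nbij' (fun f => ({u ∈ N | f u = c}, {u ∈ Nᶜ | f u = c}))
    (fun p u => if u ∈ p.1 ∪ p.2 then c else !c) ?_ ?_ ?_ ?_
  · intro f hf
    simp_all [mem_powersetCard, filter_subset, Set.subset_def]
  · rintro ⟨s, t⟩ hst
    simp only [coe_product, Set.mem_prod, mem_coe, mem_powersetCard, mem_powerset,
      subset_iff, mem_compl] at hst
    obtain ⟨⟨hsN, rfl⟩, htN⟩ := hst
    simp only [coe_filter, mem_univ, true_and, Set.mem_ofPred_eq]
    congr 1
    ext u
    grind [mem_compl]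
  · intro f _
    ext u
    by_cases hu : u ∈ N <;> cases hfu : f u <;> cases c <;> simp [hu, hfu]
  · rintro ⟨s, t⟩ hst
    simp only [coe_product, Set.mem_prod, mem_coe, mem_powersetCard, mem_powerset,
      subset_iff, mem_compl] at hst
    ext u <;> grind [mem_compl]

theorem dens_filter_card_filter_lt (N : Finset V) (c : Bool) (a : ℕ) :
    dens {f : V → Bool | #{u ∈ N | f u = c} < a} = (∑ k ∈ range a, (#N).choose k) / 2 ^ #N := by
  have hcard : #{f : V → Bool | #{u ∈ N | f u = c} < a} =
      (∑ k ∈ range a, (#N).choose k) * 2 ^ (Fintype.card V - #N) := by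
    rw [card_eq_sum_card_fiberwise (f := fun f : V → Bool => #{u ∈ N | f u = c}) (t := range a)
      (fun f hf => by simpa using hf), sum_mul]
    refine sum_congr rfl fun k hk => ?_
    rw [← card_filter_card_filter_eq N c k, filter_filter]
    congr 1
    ext f
    simp only [mem_filter, mem_univ, true_and, and_iff_right_iff_imp]
    rintro rfl
    simpa using hk
  obtain ⟨m, hm⟩ : ∃ m, Fintype.card V = m + #N := ⟨_, (Nat.sub_add_cancel (card_le_univ N)).symm⟩
  rw [dens, hcard, Fintype.card_fun, Fintype.card_bool, hm, Nat.add_sub_cancel]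
  push_cast
  rw [pow_add]
  field_simp

end Counting

section Avoiding

variable {Ω I : Type*} [Fintype Ω] [DecidableEq Ω]

def avoiding (A : I → Finset Ω) (S : Finset I) : Finset Ω := univ \ S.biUnion A

variable {A : I → Finset Ω} {S : Finset I}

@[simp] theorem mem_avoiding {f : Ω} : f ∈ avoiding A S ↔ ∀ j ∈ S, f ∉ A j := by
  simp [avoiding]

@[simp] theorem avoiding_empty : avoiding A ∅ = univ := by
  simp [avoiding]

theorem avoiding_anti {T : Finset I} (h : S ⊆ T) : avoiding A T ⊆ avoiding A S :=
  sdiff_subset_sdiff subset_rfl (biUnion_subset_biUnion_of_subset_left A h)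

theorem avoiding_insert [DecidableEq I] (j : I) (S : Finset I) :
    avoiding A (insert j S) = avoiding A S \ A j := by
  ext f
  simp [and_comm]

theorem one_sub_mul_dens_avoiding_le [DecidableEq I] {j : I} {x : ℝ}
    (h : ((A j ∩ avoiding A S).dens : ℝ) ≤ x * (avoiding A S).dens) :
    (1 - x) * (avoiding A S).dens ≤ (avoiding A (insert j S)).dens := by
  have hsplit : ((avoiding A S \ A j).dens : ℝ) + (A j ∩ avoiding A S).dens =
      (avoiding A S).dens := by
    rw [inter_comm]
    exact_mod_cast dens_sdiff_add_dens_inter _ _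
  rw [avoiding_insert]
  linarith

theorem prod_one_sub_mul_dens_avoiding_le [DecidableEq I] {x : I → ℝ} (hx : ∀ j, x j ≤ 1)
    (R T : Finset I)
    (h : ∀ j ∈ T, ∀ U ⊆ T, j ∉ U →
      ((A j ∩ avoiding A (R ∪ U)).dens : ℝ) ≤ x j * (avoiding A (R ∪ U)).dens) :
    (∏ j ∈ T, (1 - x j)) * (avoiding A R).dens ≤ (avoiding A (R ∪ T)).dens := by
  induction T using Finset.induction_on with
  | empty => simp
  | insert j T hjT ih =>
    have ihT := ih fun k hk U hU => h k (mem_insert_of_mem hk) U (hU.trans (subset_insert j T))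
    have hj := h j (mem_insert_self j T) T (subset_insert j T) hjT
    rw [prod_insert hjT, mul_assoc, union_insert]
    calc (1 - x j) * ((∏ k ∈ T, (1 - x k)) * (avoiding A R).dens)
        ≤ (1 - x j) * (avoiding A (R ∪ T)).dens :=
          mul_le_mul_of_nonneg_left ihT (sub_nonneg.mpr (hx j))
      _ ≤ (avoiding A (insert j (R ∪ T))).dens := one_sub_mul_dens_avoiding_le hj

end Avoiding

section LocalLemma

variable {V α I : Type*} [Fintype V] [DecidableEq V] [Fintype α] [DecidableEq α]
  {A : I → Finset (V → α)} {vbl : I → Set V}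

theorem dependsOn_mem_avoiding (hA : ∀ i, DependsOn (· ∈ A i) (vbl i)) (S : Finset I) :
    DependsOn (· ∈ avoiding A S) (⋃ j ∈ S, vbl j) := by
  intro f g hfg
  simp only [mem_avoiding, eq_iff_iff]
  refine forall₂_congr fun j hj => ?_
  exact (hA j fun y hy => hfg y (Set.mem_biUnion hj hy)).to_iff.not

theorem dens_inter_avoiding_le [DecidableEq I] {Γ : I → Finset I}
    (hA : ∀ i, DependsOn (· ∈ A i) (vbl i))
    (hΓ : ∀ i j, j ≠ i → j ∉ Γ i → Disjoint (vbl i) (vbl j))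
    {x : I → ℝ} (hx0 : ∀ i, 0 ≤ x i) (hx1 : ∀ i, x i ≤ 1)
    (hle : ∀ i, ((A i).dens : ℝ) ≤ x i * ∏ j ∈ Γ i, (1 - x j))
    (S : Finset I) : ∀ i ∉ S, ((A i ∩ avoiding A S).dens : ℝ) ≤ x i * (avoiding A S).dens := by
  induction S using Finset.strongInduction with | H S ih => ?_
  intro i hi
  -- `A i` is independent of the events indexed by `S₂`; those indexed by `S₁` are peeled off one
  -- at a time with the induction hypothesis.
  set S₁ := S ∩ Γ i
  set S₂ := S \ Γ i
  have hdisj : Disjoint (vbl i) (⋃ j ∈ S₂, vbl j) := by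
    refine Set.disjoint_iUnion₂_right.mpr fun j hj => ?_
    rw [mem_sdiff] at hj
    exact hΓ i j (ne_of_mem_of_not_mem hj.1 hi) hj.2
  have hpeel : (∏ j ∈ S₁, (1 - x j)) * (avoiding A S₂).dens ≤ (avoiding A S).dens := by
    have := prod_one_sub_mul_dens_avoiding_le hx1 S₂ S₁ fun j hj U hU hjU => by
      obtain ⟨hjS, hjΓ⟩ := mem_inter.mp hj
      have hj' : j ∉ S₂ ∪ U := by simp [S₂, hjΓ, hjU]
      refine ih (S₂ ∪ U) ((ssubset_iff_of_subset ?_).mpr ⟨j, hjS, hj'⟩) j hj'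
      exact union_subset sdiff_subset (hU.trans inter_subset_left)
    rwa [sdiff_union_inter] at this
  calc ((A i ∩ avoiding A S).dens : ℝ) ≤ (A i ∩ avoiding A S₂).dens := by
        exact_mod_cast dens_le_dens (inter_subset_inter_left (avoiding_anti sdiff_subset))
    _ = (A i).dens * (avoiding A S₂).dens := by
        rw [dens_inter_of_dependsOn (hA i) (dependsOn_mem_avoiding hA S₂) hdisj]; push_cast; rfl
    _ ≤ x i * (∏ j ∈ Γ i, (1 - x j)) * (avoiding A S₂).dens :=
        mul_le_mul_of_nonneg_right (hle i) (by positivity)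
    _ ≤ x i * (∏ j ∈ S₁, (1 - x j)) * (avoiding A S₂).dens := by
        refine mul_le_mul_of_nonneg_right (mul_le_mul_of_nonneg_left ?_ (hx0 i)) (by positivity)
        exact prod_le_prod_of_subset_of_le_one inter_subset_right
          (fun j _ => sub_nonneg.mpr (hx1 j)) (fun j _ _ => by linarith [hx0 j])
    _ ≤ x i * (avoiding A S).dens := by
        rw [mul_assoc]
        exact mul_le_mul_of_nonneg_left hpeel (hx0 i)

theorem lovasz_local_lemma [Nonempty α] [Fintype I] (A : I → Finset (V → α)) (vbl : I → Set V)
    (Γ : I → Finset I) (hA : ∀ i, DependsOn (· ∈ A i) (vbl i))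
    (hΓ : ∀ i j, j ≠ i → j ∉ Γ i → Disjoint (vbl i) (vbl j))
    (x : I → ℝ) (hx0 : ∀ i, 0 ≤ x i) (hx1 : ∀ i, x i < 1)
    (hle : ∀ i, ((A i).dens : ℝ) ≤ x i * ∏ j ∈ Γ i, (1 - x j)) :
    ∃ f : V → α, ∀ i, f ∉ A i := by
  classical
  have hx1' i := (hx1 i).le
  have h := prod_one_sub_mul_dens_avoiding_le hx1' ∅ univ fun j _ U _ hjU =>
    dens_inter_avoiding_le hA hΓ hx0 hx1' hle (∅ ∪ U) j (by simpa using hjU)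
  have hpos : 0 < ∏ j, (1 - x j) := prod_pos fun j _ => sub_pos.mpr (hx1 j)
  simp only [avoiding_empty, dens_univ, NNRat.cast_one, mul_one, empty_union] at h
  obtain ⟨f, hf⟩ : (avoiding A univ).Nonempty := by
    rw [← dens_pos]
    exact_mod_cast hpos.trans_le h
  exact ⟨f, fun i => mem_avoiding.mp hf i (mem_univ i)⟩

end LocalLemma

theorem four_mul_pow_four_le_two_pow {d : ℕ} (hd : 19 ≤ d) : 4 * d ^ 4 ≤ 2 ^ d := by
  induction d, hd using Nat.le_induction with
  | base => norm_num
  | succ d hd ih =>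
    have : 4 * (d + 1) ^ 4 ≤ 2 * (4 * d ^ 4) := by
      obtain ⟨e, rfl⟩ := Nat.exists_eq_add_of_le hd
      ring_nf
      nlinarith [sq_nonneg e, pow_two_nonneg (e ^ 2)]
    calc 4 * (d + 1) ^ 4 ≤ 2 * (4 * d ^ 4) := this
      _ ≤ 2 * 2 ^ d := by omega
      _ = 2 ^ (d + 1) := (pow_succ' 2 d).symm

theorem sum_choose_add_mul_le_two_pow {d : ℕ} (hd : 16 ≤ d) (h17 : d ≠ 17) :
    (∑ k ∈ range (2 + d % 2), d.choose k + (d + 1)) * (4 * d ^ 2) ≤ 2 ^ d := by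
  obtain hd18 | hd19 := le_or_gt d 18
  · interval_cases d <;> simp_all [sum_range_succ]
  have hsum : ∑ k ∈ range (2 + d % 2), d.choose k ≤ 1 + d + d.choose 2 := by
    calc ∑ k ∈ range (2 + d % 2), d.choose k ≤ ∑ k ∈ range 3, d.choose k :=
          sum_le_sum_of_subset (range_subset_range.mpr (by omega))
      _ = 1 + d + d.choose 2 := by simp [sum_range_succ]
  have hchoose : d.choose 2 * 2 = d * (d - 1) := by
    rw [Nat.choose_two_right, Nat.div_mul_cancel (Nat.even_mul_pred_self d).two_dvd]
  have hsq : ∑ k ∈ range (2 + d % 2), d.choose k + (d + 1) ≤ d ^ 2 := by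
    obtain ⟨e, rfl⟩ := Nat.exists_eq_add_of_le' hd19
    rw [show e + 19 - 1 = e + 18 by omega] at hchoose
    nlinarith
  calc (∑ k ∈ range (2 + d % 2), d.choose k + (d + 1)) * (4 * d ^ 2) ≤ d ^ 2 * (4 * d ^ 2) :=
        Nat.mul_le_mul_right _ hsq
    _ = 4 * d ^ 4 := by ring
    _ ≤ 2 ^ d := four_mul_pow_four_le_two_pow hd19

theorem exists_le_mul_one_sub_pow {d : ℕ} (hd : 14 ≤ d) (h15 : d ≠ 15) (h17 : d ≠ 17) :
    ∃ x : ℝ, 0 ≤ x ∧ x < 1 ∧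
      ((∑ k ∈ range (2 + d % 2), d.choose k + (d + 1) : ℕ) : ℝ) / 2 ^ d ≤
        x * (1 - x) ^ (d ^ 2) := by
  obtain rfl | hd16 : d = 14 ∨ 16 ≤ d := by omega
  · refine ⟨1 / 197, by norm_num, by norm_num, ?_⟩
    norm_num [sum_range_succ]
  -- With `x = 1 / (2 d²)`, Bernoulli's inequality gives `(1 - x) ^ d² ≥ 1 / 2`.
  set x : ℝ := 1 / (2 * d ^ 2)
  have hx0 : 0 ≤ x := by positivity
  have hxd : (d : ℝ) ^ 2 * x = 1 / 2 := by simp only [x]; field_simp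
  have hx1 : x < 1 := by
    have : (16 : ℝ) ≤ d := by exact_mod_cast hd16
    simp only [x]
    rw [div_lt_one (by positivity)]
    nlinarith
  refine ⟨x, hx0, hx1, ?_⟩
  have hbern : (1 : ℝ) / 2 ≤ (1 - x) ^ (d ^ 2) := by
    have := one_add_mul_le_pow (a := -x) (by linarith) (d ^ 2)
    push_cast at this
    rw [← sub_eq_add_neg] at this
    linarith
  have hkey : ((∑ k ∈ range (2 + d % 2), d.choose k + (d + 1) : ℕ) : ℝ) * (4 * d ^ 2) ≤ 2 ^ d := by
    exact_mod_cast sum_choose_add_mul_le_two_pow hd16 h17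
  rw [div_le_iff₀ (by positivity)]
  calc _ ≤ (2 : ℝ) ^ d / (4 * d ^ 2) := by rw [le_div_iff₀ (by positivity)]; exact hkey
    _ = x * (1 / 2) * 2 ^ d := by simp only [x]; field_simp; ring
    _ ≤ x * (1 - x) ^ (d ^ 2) * 2 ^ d := by gcongr

namespace SimpleGraph

variable {V : Type*} [Fintype V] [DecidableEq V] (G : SimpleGraph V) [DecidableRel G.Adj]

def closedNeighborFinset (v : V) : Finset V := insert v (G.neighborFinset v)

def twoStepNeighborFinset (v : V) : Finset V :=
  (G.neighborFinset v).biUnion fun w => (G.closedNeighborFinset w).erase v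

def badColorings (a : ℕ) (v : V) : Finset (V → Bool) :=
  {f | #{u ∈ G.neighborFinset v | f u = f v} < a ∨ #{u ∈ G.neighborFinset v | f u ≠ f v} < 2}

variable {G}

theorem card_twoStepNeighborFinset_le {d : ℕ} (hG : G.IsRegularOfDegree d) (v : V) :
    #(G.twoStepNeighborFinset v) ≤ d ^ 2 := by
  have hcard : ∀ w ∈ G.neighborFinset v, #((G.closedNeighborFinset w).erase v) = d := by
    intro w hw
    have hvw : v ∈ G.closedNeighborFinset w :=
      mem_insert_of_mem (by simpa [G.adj_comm] using hw)
    rw [card_erase_of_mem hvw, closedNeighborFinset,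
      card_insert_of_notMem (G.notMem_neighborFinset_self w), card_neighborFinset_eq_degree,
      hG.degree_eq, Nat.add_sub_cancel]
  calc #(G.twoStepNeighborFinset v)
      ≤ ∑ w ∈ G.neighborFinset v, #((G.closedNeighborFinset w).erase v) := card_biUnion_le
    _ = d ^ 2 := by
      rw [sum_congr rfl hcard, sum_const, card_neighborFinset_eq_degree, hG.degree_eq,
        smul_eq_mul, sq]

theorem disjoint_closedNeighborFinset_of_notMem {u v : V} (huv : u ≠ v)
    (hu : u ∉ G.twoStepNeighborFinset v) :
    Disjoint (G.closedNeighborFinset v : Set V) (G.closedNeighborFinset u) := by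
  refine Set.disjoint_left.mpr fun z hzv hzu => hu ?_
  simp only [closedNeighborFinset, coe_insert, coe_neighborFinset, Set.mem_insert_iff,
    mem_neighborSet] at hzv hzu
  simp only [twoStepNeighborFinset, closedNeighborFinset, mem_biUnion, mem_neighborFinset,
    mem_erase, mem_insert]
  rcases hzv with rfl | hzv
  · rcases hzu with rfl | hzu
    · exact absurd rfl huv
    · exact ⟨u, hzu.symm, huv, Or.inl rfl⟩
  · rcases hzu with rfl | hzu
    · exact ⟨z, hzv, huv, Or.inl rfl⟩
    · exact ⟨z, hzv, huv, Or.inr hzu.symm⟩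

theorem dependsOn_mem_badColorings (a : ℕ) (v : V) :
    DependsOn (· ∈ G.badColorings a v) (G.closedNeighborFinset v : Set V) := by
  intro f g hfg
  have hv : f v = g v := hfg v (mem_insert_self v _)
  have hN : ∀ u ∈ G.neighborFinset v, f u = g u := fun u hu => hfg u (mem_insert_of_mem hu)
  have h₁ : {u ∈ G.neighborFinset v | f u = f v} = {u ∈ G.neighborFinset v | g u = g v} :=
    filter_congr fun u hu => by rw [hN u hu, hv]
  have h₂ : {u ∈ G.neighborFinset v | f u ≠ f v} = {u ∈ G.neighborFinset v | g u ≠ g v} :=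
    filter_congr fun u hu => by rw [hN u hu, hv]
  simp only [badColorings, mem_filter, mem_univ, true_and, h₁, h₂]

theorem dens_badColorings_le (a : ℕ) (v : V) :
    ((G.badColorings a v).dens : ℝ) ≤
      (∑ k ∈ range a, (G.degree v).choose k + (G.degree v + 1) : ℕ) / 2 ^ G.degree v := by
  set N := G.neighborFinset v
  set X : ℝ := (∑ k ∈ range a, (G.degree v).choose k + (G.degree v + 1) : ℕ) / 2 ^ G.degree v
  -- Once the colour `c` of `v` is fixed, badness of `v` is an event about the colours on `N`.
  let Q (c : Bool) : Finset (V → Bool) :=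
    ({f | #{u ∈ N | f u = c} < a} : Finset (V → Bool)) ∪
      ({f | #{u ∈ N | f u = !c} < 2} : Finset (V → Bool))
  let P (c : Bool) : Finset (V → Bool) := {f | f v = c}
  have hQ c : ((Q c).dens : ℝ) ≤ X := by
    have := dens_union_le ({f | #{u ∈ N | f u = c} < a} : Finset (V → Bool))
      ({f | #{u ∈ N | f u = !c} < 2} : Finset (V → Bool))
    rw [dens_filter_card_filter_lt, dens_filter_card_filter_lt] at this
    simp only [X, card_neighborFinset_eq_degree, N] at this ⊢
    refine (NNRat.cast_le.mpr this).trans_eq ?_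
    push_cast [sum_range_succ, Nat.choose_zero_right, Nat.choose_one_right]
    ring
  have hQdep c : DependsOn (· ∈ Q c) (N : Set V) := by
    intro f g hfg
    have h : ∀ c, {u ∈ N | f u = c} = {u ∈ N | g u = c} := fun c =>
      filter_congr fun u hu => by rw [hfg u hu]
    simp only [Q, mem_union, mem_filter, mem_univ, true_and, h]
  have hPdep c : DependsOn (· ∈ P c) ({v} : Set V) := by
    intro f g hfg
    simp [P, hfg v rfl]
  have hvN : Disjoint ({v} : Set V) N := by simp [N]
  have hsub : G.badColorings a v ⊆ (P true ∩ Q true) ∪ (P false ∩ Q false) := by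
    intro f hf
    simp only [badColorings, mem_filter, mem_univ, true_and] at hf
    cases hfv : f v <;> simp_all [P, Q, N]
  have hP : ((P true).dens : ℝ) + (P false).dens = 1 := by
    have := dens_filter_add_dens_filter_not_eq_dens (s := (univ : Finset (V → Bool)))
      (fun f => f v = true)
    simp only [Bool.not_eq_true, dens_univ] at this
    exact_mod_cast this
  calc ((G.badColorings a v).dens : ℝ)
      ≤ ((P true ∩ Q true).dens : ℝ) + (P false ∩ Q false).dens := by
        exact_mod_cast (dens_le_dens hsub).trans (dens_union_le _ _)
    _ = ((P true).dens : ℝ) * (Q true).dens + ((P false).dens : ℝ) * (Q false).dens := by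
        rw [dens_inter_of_dependsOn (hPdep true) (hQdep true) hvN,
          dens_inter_of_dependsOn (hPdep false) (hQdep false) hvN]
        push_cast
        rfl
    _ ≤ ((P true).dens : ℝ) * X + ((P false).dens : ℝ) * X := by
        gcongr
        exacts [hQ true, hQ false]
    _ = X := by rw [← add_mul, hP, one_mul]

theorem notMem_badColorings_iff {a : ℕ} {v : V} {f : V → Bool} :
    f ∉ G.badColorings a v ↔ a ≤ (G.neighborSet v ∩ {u | f u = f v}).ncard ∧
      2 ≤ (G.neighborSet v ∩ {u | f u = f v}ᶜ).ncard := by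
  have h (p : V → Prop) [DecidablePred p] :
      (G.neighborSet v ∩ {u | p u}).ncard = #{u ∈ G.neighborFinset v | p u} := by
    rw [← Set.ncard_coe_finset]
    congr 1
    ext u
    simp
  rw [Set.compl_ofPred, h, h]
  simp only [badColorings, mem_filter, mem_univ, true_and, not_or, not_lt, ne_eq]

theorem IsRegularOfDegree.exists_forall_notMem_badColorings {d : ℕ} (hG : G.IsRegularOfDegree d)
    (hd : 14 ≤ d) (h15 : d ≠ 15) (h17 : d ≠ 17) :
    ∃ f : V → Bool, ∀ v, f ∉ G.badColorings (2 + d % 2) v := by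
  obtain ⟨x, hx0, hx1, hx⟩ := exists_le_mul_one_sub_pow hd h15 h17
  refine lovasz_local_lemma _ _ G.twoStepNeighborFinset (G.dependsOn_mem_badColorings _)
    (fun v u huv hu => disjoint_closedNeighborFinset_of_notMem huv hu) (fun _ => x) (fun _ => hx0)
    (fun _ => hx1) fun v => ?_
  calc ((G.badColorings (2 + d % 2) v).dens : ℝ)
      ≤ ((∑ k ∈ range (2 + d % 2), d.choose k + (d + 1) : ℕ) : ℝ) / 2 ^ d := by
        simpa only [hG.degree_eq] using G.dens_badColorings_le (2 + d % 2) v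
    _ ≤ x * (1 - x) ^ (d ^ 2) := hx
    _ ≤ x * ∏ _ ∈ G.twoStepNeighborFinset v, (1 - x) := by
        rw [prod_const]
        exact mul_le_mul_of_nonneg_left (pow_le_pow_of_le_one (by linarith) (by linarith)
          (card_twoStepNeighborFinset_le hG v)) hx0

end SimpleGraph

/-- Random vertex partition lemma: every `d`-regular graph, `d ≥ 14`,
`d ∉ {15,17}`, has a vertex partition `V₀ ∪ V₁` with, for `r = d mod 2`:
each vertex of `V₀` has ≥ 2+r neighbours in `V₀` and ≥ 2 in `V₁`, and
symmetrically for `V₁`. -/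
theorem stmt_10 {V : Type*} [Fintype V] (G : SimpleGraph V) (d : ℕ)
    (hd : 14 ≤ d) (h15 : d ≠ 15) (h17 : d ≠ 17)
    (hreg : ∀ v : V, deg G v = d) :
    ∃ V₀ : Set V,
      (∀ v ∈ V₀, 2 + d % 2 ≤ (G.neighborSet v ∩ V₀).ncard ∧
        2 ≤ (G.neighborSet v ∩ V₀ᶜ).ncard) ∧
      (∀ v ∈ V₀ᶜ, 2 + d % 2 ≤ (G.neighborSet v ∩ V₀ᶜ).ncard ∧
        2 ≤ (G.neighborSet v ∩ V₀).ncard) := by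
  classical
  have hG : G.IsRegularOfDegree d := fun v => by rw [← hreg v, deg]
  obtain ⟨f, hf⟩ := hG.exists_forall_notMem_badColorings hd h15 h17
  refine ⟨{v | f v = true}, fun v hv => ?_, fun v hv => ?_⟩
  · have h : {u | f u = f v} = {v | f v = true} := by
      ext u
      simp_all
    simpa [h] using G.notMem_badColorings_iff.mp (hf v)
  · have h : {u | f u = f v} = {v | f v = true}ᶜ := by
      ext u
      simp_all
    simpa [h] using G.notMem_badColorings_iff.mp (hf v)
end

section
/- Let G = (V, E) be a graph containing a maximal independent set I such that for some real α ≥ 1, with R := V \ I: (1) every vertex of I has degree at most α in G, and (2) every vertex v ∈ R satisfies d(v) ≥ α + (d_R(v) + 1)/2, where d_R(v) is the number of neighbours of v in R. Then G admits an edge weighting ω : E → {1,2,3} under which adjacent vertices have distinct weighted degrees. -/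
/-!
Give every edge inside `Iᶜ` weight `2` and every other edge weight `1`, then process the vertices
of `Iᶜ` one at a time, keeping the weights in `{1, 2, 3}`, the weights at `I` in `{1, 2}`, and the
weighted degree of each processed vertex above `A = ⌊2α⌋` and different from those of its processed
neighbours. Then a vertex `u ∈ I` has weighted degree at most `2 d(u) ≤ A`, so it is distinguished
from its neighbours too.

To process `v`, pick for every `x ∉ I` a neighbour `c x ∈ I`. Raising an edge `v u` with `u ∈ I`
from `1` to `2`, or moving one unit between `v x` and `x (c x)` for a processed neighbour `x`,
changes the weighted degree of `v` by one and that of no other vertex of `Iᶜ`. This yields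
`d_I(v) + |B| + 1` consecutive values for `v`, `B` being its processed neighbours, and the degree
condition `2 d(v) ≥ 2α + d_R(v) + 1` puts `|B| + 1` of them above `A`: one of these avoids the
weighted degrees of `B`.
-/

open Finset

theorem Finset.exists_forall_mem_Icc_sum_eq {ι : Type*} (s : Finset ι) {lo hi : ι → ℤ}
    (hle : ∀ i ∈ s, lo i ≤ hi i) {d : ℤ} (hlo : ∑ i ∈ s, lo i ≤ d) (hhi : d ≤ ∑ i ∈ s, hi i) :
    ∃ ρ : ι → ℤ, (∀ i ∈ s, ρ i ∈ Set.Icc (lo i) (hi i)) ∧ ∑ i ∈ s, ρ i = d := by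
  classical
  induction s using Finset.induction_on generalizing d with
  | empty => exact ⟨0, by simp, by simp_all [le_antisymm_iff]⟩
  | insert a s ha ih =>
    rw [sum_insert ha] at hlo hhi
    have hlea := hle a (mem_insert_self a s)
    have hsle : ∑ i ∈ s, lo i ≤ ∑ i ∈ s, hi i := sum_le_sum fun i hs => hle i (mem_insert_of_mem hs)
    set r := max (lo a) (d - ∑ i ∈ s, hi i)
    obtain ⟨ρ, hρ, hsum⟩ := ih (fun i hs => hle i (mem_insert_of_mem hs)) (d := d - r)
      (by omega) (by omega)
    refine ⟨Function.update ρ a r, ?_, ?_⟩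
    · intro i hs
      rcases eq_or_ne i a with rfl | hia
      · simp only [Function.update_self, Set.mem_Icc]
        omega
      · rw [Function.update_of_ne hia]
        exact hρ i ((mem_insert.mp hs).resolve_left hia)
    · rw [sum_insert ha, Function.update_self,
        sum_congr rfl fun i hs => Function.update_of_ne (ne_of_mem_of_not_mem hs ha) r ρ, hsum]
      ring

theorem Int.exists_mem_Icc_notMem {F : Finset ℤ} {L H : ℤ} (h : L + #F ≤ H) :
    ∃ t ∈ Icc L H, t ∉ F :=
  exists_mem_notMem_of_card_lt_card (by rw [Int.card_Icc]; omega)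

namespace SimpleGraph

open Classical

variable {V : Type*}

theorem deg_eq_card_neighborFinset [Fintype V] (G : SimpleGraph V) (v : V) :
    deg G v = #(G.neighborFinset v) := by
  rw [deg, ← card_neighborFinset_eq_degree]

theorem ncard_neighborSet_inter [Fintype V] (G : SimpleGraph V) (v : V) (S : Set V) :
    (G.neighborSet v ∩ S).ncard = #{y ∈ G.neighborFinset v | y ∈ S} := by
  rw [← Set.ncard_coe_finset]
  congr
  ext
  simp

theorem wdeg_eq_sum_neighborFinset [Fintype V] (G : SimpleGraph V) (w : Sym2 V → ℕ) (v : V) :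
    wdeg G w v = ∑ y ∈ G.neighborFinset v, w s(v, y) := by
  rw [wdeg]
  symm
  refine Finset.sum_nbij (fun y => s(v, y)) ?_ ?_ ?_ (fun _ _ => rfl)
  · intro y hy
    simpa [incidenceSet] using hy
  · intro a _ b _ hab
    exact Sym2.congr_right.mp hab
  · rintro e he
    have he' : e ∈ G.incidenceSet v := by simpa using he
    obtain ⟨y, hy, rfl⟩ : ∃ y, G.Adj v y ∧ s(v, y) = e := by
      induction e with
      | h a b =>
        obtain ⟨hab, hv⟩ := he'
        rcases Sym2.mem_iff.mp hv with rfl | rfl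
        · exact ⟨b, hab, rfl⟩
        · exact ⟨a, hab.symm, Sym2.eq_swap⟩
    exact ⟨y, by simpa using hy, rfl⟩

def adjust (w : Sym2 V → ℕ) (τ : V → V → ℤ) : Sym2 V → ℕ :=
  Sym2.lift ⟨fun a b => ((w s(a, b) : ℤ) + τ a b + τ b a).toNat, fun a b => by
    dsimp only
    rw [Sym2.eq_swap, add_right_comm]⟩

@[simp]
theorem adjust_mk (w : Sym2 V → ℕ) (τ : V → V → ℤ) (a b : V) :
    adjust w τ s(a, b) = ((w s(a, b) : ℤ) + τ a b + τ b a).toNat :=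
  rfl

theorem wdeg_adjust [Fintype V] (G : SimpleGraph V) (w : Sym2 V → ℕ) (τ : V → V → ℤ) (z : V)
    (h : ∀ y, G.Adj z y → 0 ≤ (w s(z, y) : ℤ) + τ z y + τ y z) :
    (wdeg G (adjust w τ) z : ℤ) = wdeg G w z + ∑ y ∈ G.neighborFinset z, (τ z y + τ y z) := by
  simp only [wdeg_eq_sum_neighborFinset, adjust_mk]
  push_cast
  rw [← sum_add_distrib]
  refine sum_congr rfl fun y hy => ?_
  rw [Int.toNat_of_nonneg (h y (by simpa using hy))]
  ring

/-- Used through `adjust`: the edge `v y` gains `ρ y` and, for `x ∈ B`, the edge `x (c x)` loses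
`ρ x`, so that the weighted degree of `x` does not change. -/
noncomputable def transfer (v : V) (B : Finset V) (c : V → V) (ρ : V → ℤ) (a b : V) : ℤ :=
  if a = v then ρ b else if a ∈ B ∧ b = c a then -ρ a else 0

section transfer

variable {v : V} {B : Finset V} {c : V → V} {ρ : V → ℤ}

theorem transfer_eq_zero {a b : V} (ha : a ≠ v) (hb : a ∈ B → b ≠ c a) :
    transfer v B c ρ a b = 0 := by
  rw [transfer, if_neg ha, if_neg fun h => hb h.1 h.2]

theorem transfer_center {b : V} (hb : b ≠ v) (hcb : b ∈ B → c b ≠ v) :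
    transfer v B c ρ v b + transfer v B c ρ b v = ρ b := by
  rw [transfer_eq_zero hb fun h => (hcb h).symm]
  simp [transfer]

theorem transfer_partner {a : V} (ha : a ∈ B) (hav : a ≠ v) (hcv : c a ≠ v) (hcB : c a ∉ B) :
    transfer v B c ρ a (c a) + transfer v B c ρ (c a) a = -ρ a := by
  rw [transfer_eq_zero (b := a) hcv fun h => absurd h hcB]
  simp [transfer, ha, hav]

variable [Fintype V] (G : SimpleGraph V)

theorem sum_transfer_center (hc : ∀ x ∈ B, c x ≠ v) :
    ∑ y ∈ G.neighborFinset v, (transfer v B c ρ v y + transfer v B c ρ y v) =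
      ∑ y ∈ G.neighborFinset v, ρ y :=
  sum_congr rfl fun y hy =>
    transfer_center (G.ne_of_adj ((mem_neighborFinset G v y).mp hy)).symm (hc y)

theorem sum_transfer_eq_zero {z : V} (hzv : z ≠ v) (hc : ∀ x ∈ B, c x ≠ z)
    (hcz : z ∈ B → G.Adj z (c z)) (hB : z ∈ B ↔ G.Adj z v) :
    ∑ y ∈ G.neighborFinset z, (transfer v B c ρ z y + transfer v B c ρ y z) = 0 := by
  have hout : ∀ y, transfer v B c ρ z y = if y = c z then (if z ∈ B then -ρ z else 0) else 0 := by
    intro y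
    by_cases hy : y = c z <;> by_cases hzB : z ∈ B <;> simp [transfer, hzv, hy, hzB]
  have hin : ∀ y, transfer v B c ρ y z = if y = v then ρ z else 0 := by
    intro y
    by_cases hy : y = v
    · simp [transfer, hy]
    · exact (if_neg hy).symm ▸ transfer_eq_zero hy fun hyB h => hc y hyB h.symm
  simp only [hout, hin, sum_add_distrib, sum_ite_eq', mem_neighborFinset]
  by_cases hzB : z ∈ B
  · simp [hzB, hcz hzB, hB.mp hzB]
  · simp [hzB, mt hB.mpr hzB]

end transfer

section step

variable {G : SimpleGraph V} {I : Set V} {A : ℕ} {P : Finset V} {w : Sym2 V → ℕ}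

structure IsPartialWeighting [Fintype V] (G : SimpleGraph V) (I : Set V) (A : ℕ) (P : Finset V)
    (w : Sym2 V → ℕ) : Prop where
  one_le : ∀ a b, G.Adj a b → 1 ≤ w s(a, b)
  le_three : ∀ a b, G.Adj a b → w s(a, b) ≤ 3
  le_two : ∀ a b, G.Adj a b → a ∈ I → w s(a, b) ≤ 2
  eq_one : ∀ a b, G.Adj a b → a ∈ I → b ∉ I → b ∉ P → w s(a, b) = 1
  eq_two : ∀ a b, G.Adj a b → a ∉ I → b ∉ I → b ∉ P → w s(a, b) = 2
  lt_wdeg : ∀ x ∈ P, A < wdeg G w x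
  wdeg_ne : ∀ x ∈ P, ∀ y ∈ P, G.Adj x y → wdeg G w x ≠ wdeg G w y

noncomputable def initialWeighting (I : Set V) : Sym2 V → ℕ :=
  Sym2.lift ⟨fun a b => if a ∈ I ∨ b ∈ I then 1 else 2, fun a b => by simp only [or_comm]⟩

/-- The admissible range of the shift `ρ y` of the edge `vy`: for `y ∈ I` the edge goes from `1`
to `1` or `2`, for `y ∈ P` the compensating edge `y (c y)` must stay in `{1, 2}`. -/
noncomputable def minShift (P : Finset V) (w : Sym2 V → ℕ) (c : V → V) (y : V) : ℤ :=
  if y ∈ P then w s(y, c y) - 2 else 0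

noncomputable def maxShift (I : Set V) (P : Finset V) (w : Sym2 V → ℕ) (c : V → V) (y : V) : ℤ :=
  if y ∈ P then w s(y, c y) - 1 else if y ∈ I then 1 else 0

variable {c : V → V} {v : V} {B : Finset V} {ρ : V → ℤ}

theorem minShift_le_maxShift (y : V) : minShift P w c y ≤ maxShift I P w c y := by
  simp only [minShift, maxShift]
  split_ifs <;> omega

theorem card_filter_le_sum_maxShift_sub_minShift (s : Finset V) :
    (#{y ∈ s | y ∈ P} : ℤ) ≤ ∑ y ∈ s, (maxShift I P w c y - minShift P w c y) := by
  rw [natCast_card_filter]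
  refine sum_le_sum fun y _ => ?_
  simp only [minShift, maxShift]
  split_ifs <;> omega

theorem adjust_transfer_of_notMem (hPI : ∀ x ∈ P, x ∉ I) (hc : ∀ x ∉ I, c x ∈ I ∧ G.Adj x (c x))
    (hB : ∀ x, x ∈ B ↔ G.Adj v x ∧ x ∈ P)
    (hρ : ∀ y, G.Adj v y → ρ y ∈ Set.Icc (minShift P w c y) (maxShift I P w c y))
    {a b : V} (hab : G.Adj a b) (hbI : b ∉ I) (hb : b ∉ insert v P) :
    adjust w (transfer v B c ρ) s(a, b) = w s(a, b) := by
  rw [mem_insert, not_or] at hb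
  have hab' : transfer v B c ρ a b = 0 := by
    by_cases hav : a = v
    · subst hav
      have := hρ b hab
      simp only [minShift, maxShift, if_neg hb.2, if_neg hbI, Set.mem_Icc] at this
      simp only [transfer, if_true]
      omega
    · exact transfer_eq_zero hav fun haB h => hbI (h ▸ (hc a (hPI a ((hB a).mp haB).2)).1)
  rw [adjust_mk, hab', transfer_eq_zero hb.1 fun h => absurd ((hB b).mp h).2 hb.2, add_zero,
    add_zero, Int.toNat_natCast]

variable [Fintype V]

theorem isPartialWeighting_initialWeighting :
    IsPartialWeighting G I A ∅ (initialWeighting I) where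
  one_le a b _ := by simp only [initialWeighting, Sym2.lift_mk]; split_ifs <;> omega
  le_three a b _ := by simp only [initialWeighting, Sym2.lift_mk]; split_ifs <;> omega
  le_two a b _ ha := by simp [initialWeighting, ha]
  eq_one a b _ ha _ _ := by simp [initialWeighting, ha]
  eq_two a b _ ha hb _ := by simp [initialWeighting, ha, hb]
  lt_wdeg := by simp
  wdeg_ne := by simp

theorem IsPartialWeighting.two_le_add_maxShift (hw : IsPartialWeighting G I A P w)
    (hPI : ∀ x ∈ P, x ∉ I) (hc : ∀ x ∉ I, c x ∈ I ∧ G.Adj x (c x)) (y : V) :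
    2 ≤ (if y ∈ I then 1 else 2) + maxShift I P w c y := by
  by_cases hyP : y ∈ P
  · have := hw.one_le y (c y) (hc y (hPI y hyP)).2
    simp only [maxShift, if_pos hyP, if_neg (hPI y hyP)]
    omega
  · simp only [maxShift, if_neg hyP]
    split_ifs <;> omega

theorem IsPartialWeighting.wdeg_eq_sum_of_notMem (hw : IsPartialWeighting G I A P w)
    (hvI : v ∉ I) (hvP : v ∉ P) :
    (wdeg G w v : ℤ) = ∑ y ∈ G.neighborFinset v, if y ∈ I then 1 else 2 := by
  rw [wdeg_eq_sum_neighborFinset]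
  push_cast
  refine sum_congr rfl fun y hy => ?_
  have hyv : G.Adj y v := ((mem_neighborFinset G v y).mp hy).symm
  rw [Sym2.eq_swap]
  split_ifs with hyI
  · rw [hw.eq_one y v hyv hyI hvI hvP, Nat.cast_one]
  · rw [hw.eq_two y v hyv hyI hvI hvP, Nat.cast_two]

theorem IsPartialWeighting.exists_shift (hw : IsPartialWeighting G I A P w)
    (hPI : ∀ x ∈ P, x ∉ I) (hc : ∀ x ∉ I, c x ∈ I ∧ G.Adj x (c x)) (hvI : v ∉ I) (hvP : v ∉ P)
    (hdeg : A + (G.neighborSet v ∩ Iᶜ).ncard + 1 ≤ 2 * deg G v) :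
    ∃ ρ : V → ℤ, (∀ y, G.Adj v y → ρ y ∈ Set.Icc (minShift P w c y) (maxShift I P w c y)) ∧
      (A : ℤ) < wdeg G w v + ∑ y ∈ G.neighborFinset v, ρ y ∧
      ∀ y ∈ P, G.Adj v y → (wdeg G w v : ℤ) + ∑ y ∈ G.neighborFinset v, ρ y ≠ wdeg G w y := by
  rw [deg_eq_card_neighborFinset] at hdeg
  set N := G.neighborFinset v
  set B := {y ∈ N | y ∈ P}
  have hwidth : (#B : ℤ) ≤ ∑ y ∈ N, (maxShift I P w c y - minShift P w c y) :=
    card_filter_le_sum_maxShift_sub_minShift N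
  rw [sum_sub_distrib] at hwidth
  have htop : 2 * (#N : ℤ) ≤ wdeg G w v + ∑ y ∈ N, maxShift I P w c y := by
    rw [hw.wdeg_eq_sum_of_notMem hvI hvP, ← sum_add_distrib]
    calc 2 * (#N : ℤ) = ∑ _y ∈ N, (2 : ℤ) := by rw [sum_const, nsmul_eq_mul, mul_comm]
      _ ≤ _ := sum_le_sum fun y _ => hw.two_le_add_maxShift hPI hc y
  have hBR : #B ≤ (G.neighborSet v ∩ Iᶜ).ncard := by
    rw [ncard_neighborSet_inter]
    refine card_le_card fun y hy => ?_
    simp only [B, mem_filter] at hy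
    simp only [mem_filter, Set.mem_compl_iff]
    exact ⟨hy.1, hPI y hy.2⟩
  have hF : #(B.image fun y => (wdeg G w y : ℤ)) ≤ #B := card_image_le
  obtain ⟨t, ht, htF⟩ := Int.exists_mem_Icc_notMem (F := B.image fun y => (wdeg G w y : ℤ))
    (L := max ((A : ℤ) + 1) (wdeg G w v + ∑ y ∈ N, minShift P w c y))
    (H := wdeg G w v + ∑ y ∈ N, maxShift I P w c y) (by omega)
  rw [mem_Icc] at ht
  obtain ⟨ρ, hρ, hsum⟩ := N.exists_forall_mem_Icc_sum_eq (lo := minShift P w c)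
    (hi := maxShift I P w c) (fun y _ => minShift_le_maxShift y) (d := t - wdeg G w v)
    (by omega) (by omega)
  refine ⟨ρ, fun y hy => hρ y (by simpa [N] using hy), by omega, fun y hy hvy h => htF ?_⟩
  exact mem_image.mpr ⟨y, by simp [B, N, hy, hvy], by omega⟩

theorem IsPartialWeighting.transfer_mem_Icc_of_active (hw : IsPartialWeighting G I A P w)
    (hPI : ∀ x ∈ P, x ∉ I) (hc : ∀ x ∉ I, c x ∈ I ∧ G.Adj x (c x)) (hvI : v ∉ I) (hvP : v ∉ P)
    (hB : ∀ x, x ∈ B ↔ G.Adj v x ∧ x ∈ P)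
    (hρ : ∀ y, G.Adj v y → ρ y ∈ Set.Icc (minShift P w c y) (maxShift I P w c y))
    {a b : V} (hab : G.Adj a b) (hact : a = v ∨ a ∈ B ∧ b = c a) :
    (w s(a, b) : ℤ) + transfer v B c ρ a b + transfer v B c ρ b a ∈
      Set.Icc 1 (if a ∈ I ∨ b ∈ I then 2 else 3) := by
  have hcB : ∀ x ∈ B, c x ∈ I := fun x hx => (hc x (hPI x ((hB x).mp hx).2)).1
  have hcv : ∀ x ∈ B, c x ≠ v := fun x hx => ne_of_mem_of_not_mem (hcB x hx) hvI
  rcases hact with rfl | ⟨haB, rfl⟩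
  · rw [add_assoc, transfer_center (G.ne_of_adj hab).symm (hcv b)]
    have hρb := hρ b hab
    by_cases hbI : b ∈ I
    · have hbP : b ∉ P := fun h => hPI b h hbI
      rw [Sym2.eq_swap, hw.eq_one b a hab.symm hbI hvI hvP]
      simp only [minShift, maxShift, if_neg hbP, if_pos hbI, Set.mem_Icc] at hρb
      simp only [hbI, or_true, if_true, Set.mem_Icc]
      omega
    rw [Sym2.eq_swap, hw.eq_two b a hab.symm hbI hvI hvP]
    simp only [hvI, hbI, or_self, if_false, Set.mem_Icc]
    by_cases hbP : b ∈ P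
    · have h1 := hw.one_le b (c b) (hc b hbI).2
      have h2 := hw.le_two (c b) b (hc b hbI).2.symm (hc b hbI).1
      rw [Sym2.eq_swap] at h2
      simp only [minShift, maxShift, if_pos hbP, Set.mem_Icc] at hρb
      omega
    · simp only [minShift, maxShift, if_neg hbP, if_neg hbI, Set.mem_Icc] at hρb
      omega
  · have haP := ((hB a).mp haB).2
    rw [add_assoc, transfer_partner haB (ne_of_mem_of_not_mem haP hvP) (hcv a haB)
      fun h => hPI _ ((hB _).mp h).2 (hcB a haB)]
    have hρa := hρ a ((hB a).mp haB).1
    simp only [minShift, maxShift, if_pos haP, Set.mem_Icc] at hρa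
    simp only [hcB a haB, or_true, if_true, Set.mem_Icc]
    omega

theorem IsPartialWeighting.transfer_mem_Icc (hw : IsPartialWeighting G I A P w)
    (hPI : ∀ x ∈ P, x ∉ I) (hc : ∀ x ∉ I, c x ∈ I ∧ G.Adj x (c x)) (hvI : v ∉ I) (hvP : v ∉ P)
    (hB : ∀ x, x ∈ B ↔ G.Adj v x ∧ x ∈ P)
    (hρ : ∀ y, G.Adj v y → ρ y ∈ Set.Icc (minShift P w c y) (maxShift I P w c y))
    {a b : V} (hab : G.Adj a b) :
    (w s(a, b) : ℤ) + transfer v B c ρ a b + transfer v B c ρ b a ∈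
      Set.Icc 1 (if a ∈ I ∨ b ∈ I then 2 else 3) := by
  by_cases hact : a = v ∨ a ∈ B ∧ b = c a
  · exact hw.transfer_mem_Icc_of_active hPI hc hvI hvP hB hρ hab hact
  by_cases hact' : b = v ∨ b ∈ B ∧ a = c b
  · simpa only [Sym2.eq_swap, add_right_comm, or_comm] using
      hw.transfer_mem_Icc_of_active hPI hc hvI hvP hB hρ hab.symm hact'
  simp only [not_or, not_and] at hact hact'
  rw [transfer_eq_zero hact.1 hact.2, transfer_eq_zero hact'.1 hact'.2, add_zero, add_zero]
  have h1 := hw.one_le a b hab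
  have h3 := hw.le_three a b hab
  split_ifs with hI
  · rcases hI with haI | hbI
    · exact ⟨by omega, by exact_mod_cast hw.le_two a b hab haI⟩
    · have := hw.le_two b a hab.symm hbI
      rw [Sym2.eq_swap] at this
      exact ⟨by omega, by omega⟩
  · exact ⟨by omega, by omega⟩

theorem IsPartialWeighting.wdeg_adjust_transfer_self (hw : IsPartialWeighting G I A P w)
    (hPI : ∀ x ∈ P, x ∉ I) (hc : ∀ x ∉ I, c x ∈ I ∧ G.Adj x (c x)) (hvI : v ∉ I) (hvP : v ∉ P)
    (hB : ∀ x, x ∈ B ↔ G.Adj v x ∧ x ∈ P)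
    (hρ : ∀ y, G.Adj v y → ρ y ∈ Set.Icc (minShift P w c y) (maxShift I P w c y)) :
    (wdeg G (adjust w (transfer v B c ρ)) v : ℤ) = wdeg G w v + ∑ y ∈ G.neighborFinset v, ρ y := by
  rw [wdeg_adjust G w _ v fun y h => by linarith [(hw.transfer_mem_Icc hPI hc hvI hvP hB hρ h).1],
    sum_transfer_center G fun x hx => ne_of_mem_of_not_mem (hc x (hPI x ((hB x).mp hx).2)).1 hvI]

theorem IsPartialWeighting.wdeg_adjust_transfer_of_mem (hw : IsPartialWeighting G I A P w)
    (hPI : ∀ x ∈ P, x ∉ I) (hc : ∀ x ∉ I, c x ∈ I ∧ G.Adj x (c x)) (hvI : v ∉ I) (hvP : v ∉ P)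
    (hB : ∀ x, x ∈ B ↔ G.Adj v x ∧ x ∈ P)
    (hρ : ∀ y, G.Adj v y → ρ y ∈ Set.Icc (minShift P w c y) (maxShift I P w c y))
    {z : V} (hz : z ∈ P) :
    wdeg G (adjust w (transfer v B c ρ)) z = wdeg G w z := by
  have hzI := hPI z hz
  have h := wdeg_adjust G w (transfer v B c ρ) z fun y h => by
    linarith [(hw.transfer_mem_Icc hPI hc hvI hvP hB hρ h).1]
  rw [sum_transfer_eq_zero G (ne_of_mem_of_not_mem hz hvP)
    (fun x hx => ne_of_mem_of_not_mem (hc x (hPI x ((hB x).mp hx).2)).1 hzI)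
    (fun _ => (hc z hzI).2) (by rw [hB, adj_comm]; simp [hz])] at h
  omega

theorem IsPartialWeighting.adjust_transfer (hw : IsPartialWeighting G I A P w)
    (hPI : ∀ x ∈ P, x ∉ I) (hc : ∀ x ∉ I, c x ∈ I ∧ G.Adj x (c x)) (hvI : v ∉ I) (hvP : v ∉ P)
    (hB : ∀ x, x ∈ B ↔ G.Adj v x ∧ x ∈ P)
    (hρ : ∀ y, G.Adj v y → ρ y ∈ Set.Icc (minShift P w c y) (maxShift I P w c y))
    (hA : (A : ℤ) < wdeg G w v + ∑ y ∈ G.neighborFinset v, ρ y)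
    (hne : ∀ y ∈ P, G.Adj v y → (wdeg G w v : ℤ) + ∑ y ∈ G.neighborFinset v, ρ y ≠ wdeg G w y) :
    IsPartialWeighting G I A (insert v P) (adjust w (transfer v B c ρ)) := by
  have hval := fun a b (hab : G.Adj a b) => hw.transfer_mem_Icc hPI hc hvI hvP hB hρ hab
  have hself := hw.wdeg_adjust_transfer_self hPI hc hvI hvP hB hρ
  have hmem := fun z (hz : z ∈ P) => hw.wdeg_adjust_transfer_of_mem hPI hc hvI hvP hB hρ hz
  refine ⟨fun a b hab => ?_, fun a b hab => ?_, fun a b hab haI => ?_,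
    fun a b hab haI hbI hb => ?_, fun a b hab haI hbI hb => ?_, fun x hx => ?_,
    fun x hx y hy hxy => ?_⟩
  · have := (hval a b hab).1
    rw [adjust_mk]
    omega
  · have := (hval a b hab).2
    rw [adjust_mk]
    split_ifs at this <;> omega
  · have := (hval a b hab).2
    rw [if_pos (Or.inl haI)] at this
    rw [adjust_mk]
    omega
  · rw [adjust_transfer_of_notMem hPI hc hB hρ hab hbI hb]
    exact hw.eq_one a b hab haI hbI fun h => hb (mem_insert_of_mem h)
  · rw [adjust_transfer_of_notMem hPI hc hB hρ hab hbI hb]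
    exact hw.eq_two a b hab haI hbI fun h => hb (mem_insert_of_mem h)
  · rcases mem_insert.mp hx with rfl | hxP
    · omega
    · rw [hmem x hxP]
      exact hw.lt_wdeg x hxP
  · rcases mem_insert.mp hx with rfl | hxP <;> rcases mem_insert.mp hy with rfl | hyP
    · exact absurd hxy (G.loopless.irrefl _)
    · have := hne y hyP hxy
      rw [hmem y hyP]
      omega
    · have := hne x hxP hxy.symm
      rw [hmem x hxP]
      omega
    · rw [hmem x hxP, hmem y hyP]
      exact hw.wdeg_ne x hxP y hyP hxy

theorem exists_isPartialWeighting (hc : ∀ x ∉ I, c x ∈ I ∧ G.Adj x (c x))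
    (hR : ∀ v ∉ I, A + (G.neighborSet v ∩ Iᶜ).ncard + 1 ≤ 2 * deg G v) (P : Finset V)
    (hPI : ∀ x ∈ P, x ∉ I) : ∃ w, IsPartialWeighting G I A P w := by
  induction P using Finset.induction_on with
  | empty => exact ⟨_, isPartialWeighting_initialWeighting⟩
  | insert v P hvP ih =>
    have hPI' : ∀ x ∈ P, x ∉ I := fun x hx => hPI x (mem_insert_of_mem hx)
    have hvI := hPI v (mem_insert_self v P)
    obtain ⟨w, hw⟩ := ih hPI'
    obtain ⟨ρ, hρ, hA, hne⟩ := hw.exists_shift hPI' hc hvI hvP (hR v hvI)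
    exact ⟨_, hw.adjust_transfer hPI' hc hvI hvP (B := {y ∈ G.neighborFinset v | y ∈ P})
      (by simp) hρ hA hne⟩

end step

theorem fulfills123_of_maximal_independent_set [Fintype V] (G : SimpleGraph V) (I : Set V)
    (A : ℕ) (hind : ∀ u ∈ I, ∀ v ∈ I, ¬ G.Adj u v) (hmax : ∀ v ∉ I, ∃ u ∈ I, G.Adj v u)
    (hI : ∀ u ∈ I, 2 * deg G u ≤ A)
    (hR : ∀ v ∉ I, A + (G.neighborSet v ∩ Iᶜ).ncard + 1 ≤ 2 * deg G v) :
    Fulfills123 G := by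
  choose! c hc using hmax
  obtain ⟨w, hw⟩ := exists_isPartialWeighting hc hR {x | x ∉ I} (by simp)
  have hlt : ∀ x ∉ I, A < wdeg G w x := fun x hx => hw.lt_wdeg x (by simpa)
  have hle : ∀ u ∈ I, wdeg G w u ≤ A := by
    intro u hu
    calc wdeg G w u = ∑ y ∈ G.neighborFinset u, w s(u, y) := wdeg_eq_sum_neighborFinset G w u
      _ ≤ ∑ _y ∈ G.neighborFinset u, 2 :=
        sum_le_sum fun y hy => hw.le_two u y ((mem_neighborFinset G u y).mp hy) hu
      _ = 2 * deg G u := by rw [sum_const, smul_eq_mul, mul_comm, deg_eq_card_neighborFinset]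
      _ ≤ A := hI u hu
  refine ⟨w, fun e he => ?_, fun a b hab => ?_⟩
  · induction e with
    | h a b =>
      have := hw.one_le a b he
      have := hw.le_three a b he
      omega
  · by_cases haI : a ∈ I <;> by_cases hbI : b ∈ I
    · exact absurd hab (hind a haI b hbI)
    · have := hle a haI
      have := hlt b hbI
      omega
    · have := hlt a haI
      have := hle b hbI
      omega
    · exact hw.wdeg_ne a (by simpa) b (by simpa) hab

end SimpleGraph

/-- Maximal-independent-set sufficient condition for the 1–2–3 Conjecture. -/
theorem stmt_11 {V : Type*} [Fintype V] (G : SimpleGraph V) (I : Set V) (α : ℝ)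
    (hα : 1 ≤ α)
    (hind : ∀ u ∈ I, ∀ v ∈ I, ¬ G.Adj u v)
    (hmax : ∀ v ∉ I, ∃ u ∈ I, G.Adj v u)
    (h1 : ∀ v ∈ I, (deg G v : ℝ) ≤ α)
    (h2 : ∀ v ∉ I, α + (((G.neighborSet v ∩ Iᶜ).ncard : ℝ) + 1) / 2 ≤ (deg G v : ℝ)) :
    Fulfills123 G := by
  have hfloor : (⌊2 * α⌋₊ : ℝ) ≤ 2 * α := Nat.floor_le (by linarith)
  refine G.fulfills123_of_maximal_independent_set I ⌊2 * α⌋₊ hind hmax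
    (fun u hu => Nat.le_floor ?_) (fun v hv => ?_)
  · push_cast
    linarith [h1 u hu]
  · have := h2 v hv
    exact_mod_cast (by linarith : (⌊2 * α⌋₊ : ℝ) + (G.neighborSet v ∩ Iᶜ).ncard + 1 ≤
      2 * (deg G v : ℝ))
end

section
/- If G = (V, E) is a graph with minimum degree δ(G) ≥ 10^10 + 10^8, then there exists a subset S ⊆ E of edges such that every vertex v ∈ V is incident with at least one edge of S and at most d(v) − 10^10 edges of S. -/
/-!
Every vertex `u` chooses a neighbour `g u` so that each `v` is chosen at most `d(v) - m - 1`
times; the edges `u g(u)` then cover every vertex, and `v` lies on at most `1 + |g⁻¹(v)|` of them.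
Such a choice is a matching in the graph where `v` is blown up into `d(v) - m - 1` copies, and it
exists by Hall's theorem: when `δ(G) ≥ m + 2`, for a vertex set `A` with neighbourhood `N(A)`,
`(m + 2) |A| ≤ ∑_{A} d ≤ ∑_{N(A)} d ≤ (m + 2) ∑_{N(A)} (d - m - 1)`.
-/

open Finset

theorem Finset.exists_forall_mem_ncard_preimage_le {ι α : Type*} [Finite ι] [DecidableEq α]
    (t : ι → Finset α) (c : α → ℕ) (hall : ∀ s : Finset ι, #s ≤ ∑ a ∈ s.biUnion t, c a) :
    ∃ f : ι → α, (∀ i, f i ∈ t i) ∧ ∀ a, (f ⁻¹' {a}).ncard ≤ c a := by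
  set copies : ι → Finset (Σ _ : α, ℕ) := fun i => (t i).sigma fun a => range (c a)
  have hcopies : ∀ s : Finset ι, s.biUnion copies = (s.biUnion t).sigma fun a => range (c a) := by
    intro s
    ext ⟨a, n⟩
    simp only [copies, mem_biUnion, mem_sigma, mem_range]
    tauto
  obtain ⟨f, hf_inj, hf_mem⟩ := (all_card_le_biUnion_card_iff_existsInjective' copies).mp
    fun s => by simpa [hcopies] using hall s
  have hf_mem' : ∀ i, (f i).1 ∈ t i ∧ (f i).2 < c (f i).1 := fun i => by
    simpa [copies] using hf_mem i
  refine ⟨fun i => (f i).1, fun i => (hf_mem' i).1, fun a => ?_⟩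
  calc ((fun i => (f i).1) ⁻¹' {a}).ncard ≤ (↑(range (c a)) : Set ℕ).ncard := by
        refine Set.ncard_le_ncard_of_injOn (fun i => (f i).2) ?_ ?_ (Set.toFinite _)
        · rintro i rfl
          simpa using (hf_mem' i).2
        · intro i hi j hj hij
          exact hf_inj (Sigma.ext (hi.trans hj.symm) (heq_of_eq hij))
    _ = c a := by simp

namespace SimpleGraph

variable {V : Type*} [Fintype V] [DecidableEq V] (G : SimpleGraph V) [DecidableRel G.Adj]

theorem sum_degree_le_sum_degree_biUnion_neighborFinset (s : Finset V) :
    ∑ u ∈ s, G.degree u ≤ ∑ v ∈ s.biUnion (G.neighborFinset ·), G.degree v := by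
  set N := s.biUnion (G.neighborFinset ·)
  calc ∑ u ∈ s, G.degree u = ∑ u ∈ s, #(N.bipartiteAbove G.Adj u) := by
        refine sum_congr rfl fun u hu => ?_
        rw [← card_neighborFinset_eq_degree, bipartiteAbove]
        congr 1
        ext v
        simpa [N] using fun h : G.Adj u v => ⟨u, hu, h⟩
    _ = ∑ v ∈ N, #(s.bipartiteBelow G.Adj v) :=
        sum_card_bipartiteAbove_eq_sum_card_bipartiteBelow _
    _ ≤ ∑ v ∈ N, G.degree v := by
        refine sum_le_sum fun v _ => ?_
        rw [← card_neighborFinset_eq_degree]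
        refine card_le_card fun u hu => ?_
        simpa [bipartiteBelow, adj_comm] using (mem_filter.mp hu).2

theorem card_le_sum_biUnion_neighborFinset {k : ℕ} (hk : 0 < k) (c : V → ℕ)
    (hδ : ∀ v, k ≤ G.degree v) (hc : ∀ v, G.degree v ≤ k * c v) (s : Finset V) :
    #s ≤ ∑ v ∈ s.biUnion (G.neighborFinset ·), c v := by
  refine Nat.le_of_mul_le_mul_left ?_ hk
  calc k * #s = ∑ _u ∈ s, k := by rw [sum_const, smul_eq_mul, mul_comm]
    _ ≤ ∑ u ∈ s, G.degree u := sum_le_sum fun u _ => hδ u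
    _ ≤ ∑ v ∈ s.biUnion (G.neighborFinset ·), G.degree v :=
        G.sum_degree_le_sum_degree_biUnion_neighborFinset s
    _ ≤ ∑ v ∈ s.biUnion (G.neighborFinset ·), k * c v := sum_le_sum fun v _ => hc v
    _ = k * ∑ v ∈ s.biUnion (G.neighborFinset ·), c v := (mul_sum _ _ _).symm

theorem exists_adj_ncard_preimage_le_degree_sub (m : ℕ) (hδ : ∀ v, m + 2 ≤ G.degree v) :
    ∃ g : V → V, (∀ u, G.Adj u (g u)) ∧ ∀ v, (g ⁻¹' {v}).ncard ≤ G.degree v - (m + 1) := by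
  have hc : ∀ v, G.degree v ≤ (m + 2) * (G.degree v - (m + 1)) := fun v => by
    obtain ⟨d, hd⟩ := Nat.exists_eq_add_of_le (hδ v)
    rw [hd, show m + 2 + d - (m + 1) = d + 1 by omega]
    nlinarith
  obtain ⟨g, hg_adj, hg_load⟩ := exists_forall_mem_ncard_preimage_le (G.neighborFinset ·) _
    (G.card_le_sum_biUnion_neighborFinset (Nat.succ_pos _) _ hδ hc)
  exact ⟨g, fun u => (G.mem_neighborFinset u (g u)).mp (hg_adj u), hg_load⟩

end SimpleGraph

theorem Sym2.ncard_setOf_mem_range_mk_le {V : Type*} [Finite V] (g : V → V) (v : V) :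
    {e ∈ Set.range fun u => s(u, g u) | v ∈ e}.ncard ≤ (g ⁻¹' {v}).ncard + 1 := by
  have hsub : {e ∈ Set.range fun u => s(u, g u) | v ∈ e} ⊆
      (fun u => s(u, g u)) '' insert v (g ⁻¹' {v}) := by
    rintro e ⟨⟨u, rfl⟩, hv⟩
    rcases Sym2.mem_iff.mp hv with h | h
    · exact ⟨u, .inl h.symm, rfl⟩
    · exact ⟨u, .inr h.symm, rfl⟩
  calc _ ≤ ((fun u => s(u, g u)) '' insert v (g ⁻¹' {v})).ncard := Set.ncard_le_ncard hsub
    _ ≤ (insert v (g ⁻¹' {v})).ncard := Set.ncard_image_le (Set.toFinite _)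
    _ ≤ (g ⁻¹' {v}).ncard + 1 := Set.ncard_insert_le _ _

theorem SimpleGraph.exists_subset_edgeSet_one_le_ncard_incident_le_degree_sub {V : Type*}
    [Fintype V] [DecidableEq V] (G : SimpleGraph V) [DecidableRel G.Adj] (m : ℕ)
    (hδ : ∀ v, m + 2 ≤ G.degree v) :
    ∃ S ⊆ G.edgeSet, ∀ v, 1 ≤ {e ∈ S | v ∈ e}.ncard ∧ {e ∈ S | v ∈ e}.ncard ≤ G.degree v - m := by
  obtain ⟨g, hg_adj, hg_load⟩ := G.exists_adj_ncard_preimage_le_degree_sub m hδ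
  refine ⟨Set.range fun u => s(u, g u), Set.range_subset_iff.mpr hg_adj, fun v => ⟨?_, ?_⟩⟩
  · exact (Set.ncard_pos (Set.toFinite _)).mpr ⟨s(v, g v), ⟨v, rfl⟩, by simp⟩
  · have := Sym2.ncard_setOf_mem_range_mk_le g v
    have := hg_load v
    have := hδ v
    omega

/-- If `δ(G) ≥ 10^10 + 10^8` then there is an edge subset `S` with
`1 ≤ d_S(v) ≤ d(v) - 10^10` for every vertex `v`. -/
theorem stmt_15 {V : Type*} [Fintype V] (G : SimpleGraph V)
    (hδ : ∀ v : V, 10 ^ 10 + 10 ^ 8 ≤ deg G v) :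
    ∃ S ⊆ G.edgeSet, ∀ v : V,
      1 ≤ {e ∈ S | v ∈ e}.ncard ∧ {e ∈ S | v ∈ e}.ncard ≤ deg G v - 10 ^ 10 := by
  classical
  have hdeg : ∀ v, deg G v = G.degree v := fun v => by unfold deg; congr!
  simp only [hdeg] at hδ ⊢
  exact G.exists_subset_edgeSet_one_le_ncard_incident_le_degree_sub (10 ^ 10)
    fun v => le_trans (by norm_num) (hδ v)
end
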